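/- arXiv:1409.7826 — 7 statements merged into one kernel-verified Lean document; each statement's English description precedes it below -/
import Mathlib

section
/- Let w ∈ Δ be an equilibrium of the vector field F which is unstable, i.e. there exists an index i with w_i = 0 and ∂L/∂v_i(w) > 0. Then for the graph-based Pólya urn on G, the probability that x(n) converges to w as n → ∞ is zero. -/
open MeasureTheory Filter Finset

/-- `v_i + v_j` as a function of the unordered pair `{i,j}`. -/
noncomputable def pairSum {m : ℕ} (v : Fin m → ℝ) : Sym2 (Fin m) → ℝ :=
  Sym2.lift ⟨fun i j => v i + v j, fun i j => add_comm (v i) (v j)⟩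

/-- The domain `Δ`: nonnegative vectors summing to `1` with `v_i + v_j ≥ c` on every edge. -/
def urnDomain {m : ℕ} (G : SimpleGraph (Fin m)) (c : ℝ) : Set (Fin m → ℝ) :=
  {v | (∀ i, 0 ≤ v i) ∧ (∑ i, v i) = 1 ∧ ∀ i j, G.Adj i j → c ≤ v i + v j}

/-- `∂L/∂v_i (v) = -1 + (1/N) Σ_{j ∼ i} 1/(v_i + v_j)`. -/
noncomputable def dLyap {m : ℕ} (G : SimpleGraph (Fin m)) [DecidableRel G.Adj] (N : ℕ)
    (i : Fin m) (v : Fin m → ℝ) : ℝ :=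
  -1 + (1 / (N : ℝ)) * ∑ j ∈ G.neighborFinset i, 1 / (v i + v j)

/-- The set of non-unstable equilibria of the vector field `F_i(v) = v_i ∂L/∂v_i(v)`. -/
def nonUnstableEquilibria {m : ℕ} (G : SimpleGraph (Fin m)) [DecidableRel G.Adj]
    (N : ℕ) (c : ℝ) : Set (Fin m → ℝ) :=
  {w ∈ urnDomain G c | (∀ i, w i * dLyap G N i w = 0) ∧
    (∀ i, 0 < w i → dLyap G N i w = 0) ∧ (∀ i, w i = 0 → dLyap G N i w ≤ 0)}

/-!
Fix the unstable coordinate `i` and write `S_n = ∑_{j ∼ i} 1 / (B_i(n) + B_j(n))`. Since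
`∂L/∂v_i(w) > 0`, convergence of `x(n)` to `w` forces `(N₀ + nN) S_n ≥ N r` eventually, for
some `r > 1`. Convexity of `d ↦ (b + d)⁻¹` gives the one-step drift
`E[1 / B_i(n+1) | ℱ_n] ≤ 1 / B_i(n) - S_n / (B_i(n) + N)`, so on the event that `B_i ≥ K` and
the drift bound holds from time `n₀` on, `E[1 / B_i(n)]` decays like `n ^ (-κ r)` with
`κ = K / (K + N)`. If `B_i` reaches a level `K` with `κ r > 1`, this beats the trivial bound
`1 / B_i(n) ≥ 1 / (N₀ + nN)`; if `B_i` stays below `K`, it contradicts `1 / B_i(n) ≥ 1 / K`.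
Either way, convergence to `w` has probability zero.
-/

/-- The chord of the convex function `d ↦ (b + d)⁻¹` over `[0, r]` lies above it. -/
theorem inv_add_le_inv_sub_div {b d r : ℝ} (hb : 0 < b) (hd : 0 ≤ d) (hdr : d ≤ r) :
    (b + d)⁻¹ ≤ b⁻¹ - d / (b * (b + r)) := by
  have hbd : (b + d)⁻¹ = b⁻¹ - d / (b * (b + d)) := by field_simp; ring
  rw [hbd]
  gcongr

theorem inv_sub_div_le_one_sub_mul_mul_inv {b K r ℓ S : ℝ} (hK : 0 < K) (hKb : K ≤ b)
    (hr : 0 ≤ r) (hℓ : 0 ≤ ℓ) (hℓS : ℓ ≤ S) :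
    b⁻¹ - S / (b + r) ≤ (1 - K / (K + r) * ℓ) * b⁻¹ := by
  have hb : 0 < b := hK.trans_le hKb
  have hKr : K / (K + r) ≤ b / (b + r) := by
    rw [div_le_div_iff₀ (by positivity) (by positivity)]
    nlinarith
  have : K / (K + r) * ℓ * b⁻¹ ≤ S / (b + r) :=
    calc K / (K + r) * ℓ * b⁻¹ ≤ b / (b + r) * S * b⁻¹ := by gcongr
      _ = S / (b + r) := by field_simp
  linarith

theorem one_sub_mul_div_le_rpow {y h β : ℝ} (hy : 0 < y) (hh : 0 ≤ h) (hβ : 0 ≤ β) :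
    1 - β * h / y ≤ (y / (y + h)) ^ β := by
  have hexp : Real.exp (-(h / y)) ≤ y / (y + h) := by
    rw [Real.exp_neg, show y / (y + h) = (1 + h / y)⁻¹ by field_simp]
    exact inv_anti₀ (by positivity) (by linarith [Real.add_one_le_exp (h / y)])
  calc 1 - β * h / y ≤ Real.exp (-(β * h / y)) := by linarith [Real.add_one_le_exp (-(β * h / y))]
    _ = Real.exp (-(h / y)) ^ β := by rw [← Real.exp_mul]; ring_nf
    _ ≤ (y / (y + h)) ^ β := Real.rpow_le_rpow (Real.exp_pos _).le hexp hβ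

theorem prod_Ico_one_sub_le_rpow {a h β : ℝ} {n₀ n : ℕ} (ha : 0 < a + n₀ * h) (hh : 0 ≤ h)
    (hβ : 0 ≤ β) (hcap : β * h ≤ a + n₀ * h) (hn : n₀ ≤ n) :
    ∏ k ∈ Ico n₀ n, (1 - β * h / (a + k * h)) ≤ ((a + n₀ * h) / (a + n * h)) ^ β := by
  induction n, hn using Nat.le_induction with
  | base => simp [div_self ha.ne']
  | succ n hn ih =>
    have hmono : a + n₀ * h ≤ a + n * h := by gcongr
    have hy : 0 < a + n * h := ha.trans_le hmono
    have hfactor : 0 ≤ 1 - β * h / (a + n * h) := by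
      rw [sub_nonneg, div_le_one hy]; linarith
    rw [prod_Ico_succ_top hn]
    calc (∏ k ∈ Ico n₀ n, (1 - β * h / (a + k * h))) * (1 - β * h / (a + n * h))
        ≤ ((a + n₀ * h) / (a + n * h)) ^ β * ((a + n * h) / (a + n * h + h)) ^ β := by
          gcongr
          exact one_sub_mul_div_le_rpow hy hh hβ
      _ = ((a + n₀ * h) / (a + ↑(n + 1) * h)) ^ β := by
          rw [← Real.mul_rpow (by positivity) (by positivity), div_mul_div_cancel₀ hy.ne']
          push_cast; ring_nf

theorem le_zero_of_forall_le_mul_rpow_neg {r C a h γ : ℝ} (hh : 0 < h) (hγ : 0 < γ) {n₀ : ℕ}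
    (hr : ∀ n ≥ n₀, r ≤ C * (a + n * h) ^ (-γ)) : r ≤ 0 := by
  have hlim : Tendsto (fun n : ℕ => C * (a + n * h) ^ (-γ)) atTop (nhds 0) := by
    simpa using ((tendsto_rpow_neg_atTop hγ).comp (tendsto_atTop_add_const_left _ a
      (tendsto_natCast_atTop_atTop.atTop_mul_const hh))).const_mul C
  exact ge_of_tendsto hlim (eventually_atTop.2 ⟨n₀, hr⟩)

theorem exists_one_lt_div_add_mul {r c : ℝ} (hc : 1 < c) :
    ∃ K : ℕ, 1 ≤ K ∧ 1 < K / (K + r) * c := by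
  have hlim := (tendsto_natCast_div_add_atTop r).mul_const c
  rw [one_mul] at hlim
  exact ((hlim.eventually_const_lt hc).and (eventually_ge_atTop 1)).exists.imp fun K hK =>
    ⟨hK.2, hK.1⟩

/-- Configurations `f` with `f e₀ = v` that are free on `E \ {e₀}`; outside `E` they are pinned to
the dummy value `v`, so that the configurations are in bijection with their restrictions to `E`. -/
theorem sum_piFinset_prod_eq {α β R : Type*} [Fintype α] [DecidableEq α] [CommSemiring R]
    (E : Finset α) (t : α → Finset β) (P : α → β → R) (hP : ∀ e ∈ E, ∑ u ∈ t e, P e u = 1)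
    {e₀ : α} (he₀ : e₀ ∈ E) (v : β) :
    ∑ f ∈ Fintype.piFinset (fun e => if e ∈ E ∧ e ≠ e₀ then t e else {v}), ∏ e ∈ E, P e (f e)
      = P e₀ v := by
  set T : α → Finset β := fun e => if e ∈ E ∧ e ≠ e₀ then t e else {v}
  calc _ = ∑ f ∈ Fintype.piFinset T, ∏ e, if e ∈ E then P e (f e) else 1 :=
        sum_congr rfl fun f _ => (Fintype.prod_ite_mem E fun e => P e (f e)).symm
    _ = ∏ e, ∑ u ∈ T e, if e ∈ E then P e u else 1 :=
        (prod_univ_sum T fun e u => if e ∈ E then P e u else 1).symm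
    _ = ∏ e, if e = e₀ then P e₀ v else 1 := by
        refine prod_congr rfl fun e _ => ?_
        by_cases he : e = e₀
        · simp [T, he, he₀]
        by_cases hE : e ∈ E <;> simp [T, he, hE, hP]
    _ = P e₀ v := Fintype.prod_ite_eq' e₀ _

theorem indicator_eq_sum_piFinset_indicator {Ω α β : Type*} [Fintype α] [DecidableEq α]
    [DecidableEq β] (E : Finset α) (X : α → Ω → β) (t : α → Finset β)
    (hXt : ∀ e ∈ E, ∀ ω, X e ω ∈ t e) {e₀ : α} (he₀ : e₀ ∈ E) (v : β) :
    {ω | X e₀ ω = v}.indicator (fun _ => (1 : ℝ))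
      = ∑ f ∈ Fintype.piFinset (fun e => if e ∈ E ∧ e ≠ e₀ then t e else {v}),
          {ω | ∀ e ∈ E, X e ω = f e}.indicator (fun _ => (1 : ℝ)) := by
  ext ω
  have hS : ∀ f ∈ Fintype.piFinset (fun e => if e ∈ E ∧ e ≠ e₀ then t e else {v}),
      f e₀ = v ∧ ∀ e ∉ E, f e = v := by
    intro f hf
    refine ⟨by simpa using Fintype.mem_piFinset.1 hf e₀, fun e he => ?_⟩
    simpa [he] using Fintype.mem_piFinset.1 hf e
  rw [Finset.sum_apply]
  by_cases hv : X e₀ ω = v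
  · set f₀ : α → β := fun e => if e ∈ E then X e ω else v
    have hf₀ : f₀ ∈ Fintype.piFinset (fun e => if e ∈ E ∧ e ≠ e₀ then t e else {v}) := by
      refine Fintype.mem_piFinset.2 fun e => ?_
      by_cases he : e = e₀
      · subst he; simp [f₀, he₀, hv]
      by_cases hE : e ∈ E <;> simp [f₀, he, hE, hXt]
    rw [sum_eq_single_of_mem f₀ hf₀]
    · rw [Set.indicator_of_mem (show ω ∈ {ω | X e₀ ω = v} from hv),
        Set.indicator_of_mem (fun e he => by simp [f₀, he])]
    · intro f hf hne
      refine Set.indicator_of_notMem (fun hω => hne (funext fun e => ?_)) _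
      by_cases hE : e ∈ E
      · simp [f₀, hE, hω e hE]
      · simp [f₀, hE, (hS f hf).2 e hE]
  · rw [Set.indicator_of_notMem (show ω ∉ {ω | X e₀ ω = v} from hv)]
    refine (sum_eq_zero fun f hf => Set.indicator_of_notMem (fun hω => hv ?_) _).symm
    exact (hω e₀ he₀).trans (hS f hf).1

section Probability

variable {Ω : Type*} {m m₀ : MeasurableSpace Ω} {μ : Measure Ω}

theorem setIntegral_le_prod_mul_of_condExp_le [IsFiniteMeasure μ] {ℱ : ℕ → MeasurableSpace Ω}
    (hℱ : ∀ n, ℱ n ≤ m₀) {Y : ℕ → Ω → ℝ} (hY : ∀ n, Integrable (Y n) μ) (hY0 : ∀ n, 0 ≤ Y n)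
    {s : ℕ → Set Ω} {ρ : ℕ → ℝ} {n₀ : ℕ} (hs : ∀ n ≥ n₀, MeasurableSet[ℱ n] (s n))
    (hs_succ : ∀ n ≥ n₀, s (n + 1) ⊆ s n) (hρ : ∀ n ≥ n₀, ρ n ≤ 1)
    (hdrift : ∀ n ≥ n₀, ∀ᵐ ω ∂μ, ω ∈ s n → μ[Y (n + 1) | ℱ n] ω ≤ (1 - ρ n) * Y n ω)
    {n : ℕ} (hn : n₀ ≤ n) :
    ∫ ω in s n, Y n ω ∂μ ≤ (∏ k ∈ Ico n₀ n, (1 - ρ k)) * ∫ ω in s n₀, Y n₀ ω ∂μ := by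
  induction n, hn using Nat.le_induction with
  | base => simp
  | succ n hn ih =>
    have hsn : MeasurableSet (s n) := hℱ n _ (hs n hn)
    rw [prod_Ico_succ_top hn]
    calc ∫ ω in s (n + 1), Y (n + 1) ω ∂μ
        ≤ ∫ ω in s n, Y (n + 1) ω ∂μ :=
          setIntegral_mono_set (hY _).integrableOn (ae_of_all _ (hY0 _))
            (hs_succ n hn).eventuallyLE
      _ = ∫ ω in s n, μ[Y (n + 1) | ℱ n] ω ∂μ := (setIntegral_condExp (hℱ n) (hY _) (hs n hn)).symm
      _ ≤ ∫ ω in s n, (1 - ρ n) * Y n ω ∂μ := by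
          refine setIntegral_mono_ae_restrict integrable_condExp.integrableOn
            ((hY n).const_mul _).integrableOn ?_
          exact (ae_restrict_iff' hsn).2 (hdrift n hn)
      _ = (1 - ρ n) * ∫ ω in s n, Y n ω ∂μ := integral_const_mul _ _
      _ ≤ (1 - ρ n) * ((∏ k ∈ Ico n₀ n, (1 - ρ k)) * ∫ ω in s n₀, Y n₀ ω ∂μ) := by
          gcongr
          linarith [hρ n hn]
      _ = _ := by ring

theorem measureReal_mul_le_setIntegral [IsFiniteMeasure μ] {f : Ω → ℝ} (hf : 0 ≤ f)
    (hfi : Integrable f μ) {s t : Set Ω} {ε : ℝ} (hts : t ⊆ s) (hε : ∀ ω ∈ t, ε ≤ f ω) :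
    μ.real t * ε ≤ ∫ ω in s, f ω ∂μ := by
  rcases lt_or_ge ε 0 with hε0 | hε0
  · exact (mul_nonpos_of_nonneg_of_nonpos measureReal_nonneg hε0.le).trans
      (setIntegral_nonneg_of_ae_restrict (ae_of_all _ hf))
  calc μ.real t * ε ≤ ε * (μ.restrict s).real {ω | ε ≤ f ω} := by
        rw [mul_comm]
        gcongr
        exact ENNReal.toReal_mono (measure_ne_top _ _) ((Measure.le_restrict_apply _ _).trans'
          (measure_mono fun ω hω => ⟨hε ω hω, hts hω⟩))
    _ ≤ ∫ ω in s, f ω ∂μ :=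
        mul_meas_ge_le_integral_of_nonneg (ae_of_all _ hf) hfi.integrableOn ε

theorem condExp_indicator_eq_of_condExp_joint {α β : Type*} [IsFiniteMeasure μ] [Fintype α]
    [DecidableEq α] [DecidableEq β] {E : Finset α} {X : α → Ω → β} (hX : ∀ f : α → β, MeasurableSet {ω | ∀ e ∈ E, X e ω = f e})
    {t : α → Finset β} (hXt : ∀ e ∈ E, ∀ ω, X e ω ∈ t e) {P : α → β → Ω → ℝ}
    (hP : ∀ e ∈ E, ∀ ω, ∑ u ∈ t e, P e u ω = 1)
    (hjoint : ∀ f : α → β, (∀ e ∈ E, f e ∈ t e) →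
      μ[{ω | ∀ e ∈ E, X e ω = f e}.indicator (fun _ => (1 : ℝ)) | m]
        =ᵐ[μ] fun ω => ∏ e ∈ E, P e (f e) ω)
    {e₀ : α} (he₀ : e₀ ∈ E) {v : β} (hv : v ∈ t e₀) :
    μ[{ω | X e₀ ω = v}.indicator (fun _ => (1 : ℝ)) | m] =ᵐ[μ] P e₀ v := by
  set S := Fintype.piFinset (fun e => if e ∈ E ∧ e ≠ e₀ then t e else {v})
  have hSt : ∀ f ∈ S, ∀ e ∈ E, f e ∈ t e := by
    intro f hf e he
    have := Fintype.mem_piFinset.1 hf e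
    by_cases he' : e = e₀
    · subst he'; simp_all
    · simpa [he, he'] using this
  have hjointS : ∀ᵐ ω ∂μ, ∀ f ∈ S,
      μ[{ω | ∀ e ∈ E, X e ω = f e}.indicator (fun _ => (1 : ℝ)) | m] ω
        = ∏ e ∈ E, P e (f e) ω :=
    (eventually_all_finset S).2 fun f hf => hjoint f (hSt f hf)
  rw [indicator_eq_sum_piFinset_indicator E X t hXt he₀ v]
  filter_upwards [condExp_finsetSum (fun f _ => (integrable_const (1 : ℝ)).indicator (hX f)) m,
    hjointS] with ω hsum hω
  rw [hsum, Finset.sum_apply, sum_congr rfl hω]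
  exact sum_piFinset_prod_eq E t (fun e u => P e u ω) (fun e he => hP e he ω) he₀ v

end Probability

noncomputable def invNeighborSum {m : ℕ} (G : SimpleGraph (Fin m)) [DecidableRel G.Adj]
    (v : Fin m → ℝ) (i : Fin m) : ℝ :=
  ∑ j ∈ G.neighborFinset i, (v i + v j)⁻¹

section Graph

variable {m : ℕ} {G : SimpleGraph (Fin m)} [DecidableRel G.Adj]

theorem dLyap_eq (N : ℕ) (i : Fin m) (v : Fin m → ℝ) :
    dLyap G N i v = -1 + invNeighborSum G v i / N := by
  simp [dLyap, invNeighborSum, div_eq_inv_mul]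

theorem invNeighborSum_smul (r : ℝ) (v : Fin m → ℝ) (i : Fin m) :
    invNeighborSum G (r • v) i = r⁻¹ * invNeighborSum G v i := by
  simp only [invNeighborSum, Pi.smul_apply, smul_eq_mul, ← mul_add, mul_inv, mul_sum]

theorem continuousAt_invNeighborSum {w : Fin m → ℝ} {i : Fin m}
    (hw : ∀ j, G.Adj i j → w i + w j ≠ 0) : ContinuousAt (invNeighborSum G · i) w := by
  refine tendsto_finsetSum _ fun j hj => ?_
  exact ((continuous_apply i).add (continuous_apply j)).continuousAt.inv₀
    (hw j ((G.mem_neighborFinset i j).1 hj))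

theorem incidenceFinset_eq_image (i : Fin m) :
    G.incidenceFinset i = (G.neighborFinset i).image (s(i, ·)) := by
  ext e
  induction e using Sym2.ind with
  | h a b =>
    simp only [SimpleGraph.incidenceFinset_eq_filter, mem_filter, SimpleGraph.mem_edgeFinset,
      SimpleGraph.mem_edgeSet, mem_image, SimpleGraph.mem_neighborFinset, Sym2.mem_iff]
    constructor
    · rintro ⟨hab, rfl | rfl⟩
      · exact ⟨b, hab, rfl⟩
      · exact ⟨a, hab.symm, Sym2.eq_swap⟩
    · rintro ⟨j, hij, hj⟩
      rcases Sym2.eq_iff.1 hj with ⟨rfl, rfl⟩ | ⟨rfl, rfl⟩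
      exacts [⟨hij, Or.inl rfl⟩, ⟨hij.symm, Or.inr rfl⟩]

theorem sum_incidenceFinset_div_pairSum (v : Fin m → ℝ) (i : Fin m) :
    ∑ e ∈ G.incidenceFinset i, v i / pairSum v e = v i * invNeighborSum G v i := by
  rw [incidenceFinset_eq_image, sum_image fun a _ b _ hab => Sym2.congr_right.1 hab,
    invNeighborSum, mul_sum]
  rfl

theorem sum_div_pairSum_eq_one {v : Fin m → ℝ} (hv : ∀ j, 0 < v j) {e : Sym2 (Fin m)}
    (he : ¬ e.IsDiag) : ∑ u ∈ univ.filter (· ∈ e), v u / pairSum v e = 1 := by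
  induction e using Sym2.ind with
  | h a b =>
    have hab : a ≠ b := he
    have hfilt : univ.filter (· ∈ s(a, b)) = {a, b} := by ext; simp
    rw [hfilt, sum_pair hab, ← add_div]
    exact div_self (add_pos (hv a) (hv b)).ne'

end Graph

structure IsGraphUrn {m : ℕ} (G : SimpleGraph (Fin m)) [DecidableRel G.Adj] {Ω : Type*}
    [MeasurableSpace Ω] (μ : Measure Ω) (choice : ℕ → Sym2 (Fin m) → Ω → Fin m)
    (B : ℕ → Fin m → Ω → ℕ) (ℱ : ℕ → MeasurableSpace Ω) : Prop where
  measurable_choice : ∀ n e, Measurable (choice n e)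
  choice_mem : ∀ n e ω, e ∈ G.edgeFinset → choice n e ω ∈ e
  one_le_B_zero : ∀ i ω, 1 ≤ B 0 i ω
  B_zero_eq : ∀ i ω ω', B 0 i ω = B 0 i ω'
  B_succ : ∀ n i ω, B (n + 1) i ω
    = B n i ω + (G.edgeFinset.filter fun e => choice (n + 1) e ω = i).card
  filtration_eq : ∀ n, ℱ n = ⨆ (k : ℕ) (_ : k ≤ n) (e : Sym2 (Fin m)) (_ : e ∈ G.edgeFinset),
    MeasurableSpace.comap (choice k e) ⊤
  condExp_choice : ∀ (n : ℕ) (f : Sym2 (Fin m) → Fin m), (∀ e ∈ G.edgeFinset, f e ∈ e) →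
    μ[Set.indicator {ω | ∀ e ∈ G.edgeFinset, choice (n + 1) e ω = f e} (fun _ => (1 : ℝ)) | ℱ n]
      =ᵐ[μ] fun ω => ∏ e ∈ G.edgeFinset, (B n (f e) ω : ℝ) / pairSum (fun i => (B n i ω : ℝ)) e

def driftEvent {m : ℕ} (G : SimpleGraph (Fin m)) [DecidableRel G.Adj] {Ω : Type*}
    (B : ℕ → Fin m → Ω → ℕ) (i : Fin m) (K : ℕ) (ℓ : ℕ → ℝ) (n₀ n : ℕ) : Set Ω :=
  {ω | K ≤ B n₀ i ω ∧ ∀ k ∈ Icc n₀ n, ℓ k ≤ invNeighborSum G (fun j => (B k j ω : ℝ)) i}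

namespace IsGraphUrn

variable {m : ℕ} {G : SimpleGraph (Fin m)} [DecidableRel G.Adj] {Ω : Type*}
  [m₀ : MeasurableSpace Ω] {μ : Measure Ω} {choice : ℕ → Sym2 (Fin m) → Ω → Fin m}
  {B : ℕ → Fin m → Ω → ℕ} {ℱ : ℕ → MeasurableSpace Ω}

theorem one_le_B (h : IsGraphUrn G μ choice B ℱ) (n : ℕ) (i : Fin m) (ω : Ω) : 1 ≤ B n i ω := by
  induction n with
  | zero => exact h.one_le_B_zero i ω
  | succ n ih => rw [h.B_succ]; omega

theorem monotone_B (h : IsGraphUrn G μ choice B ℱ) (i : Fin m) (ω : Ω) :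
    Monotone (B · i ω) :=
  monotone_nat_of_le_succ fun n => by rw [h.B_succ]; omega

theorem sum_B (h : IsGraphUrn G μ choice B ℱ) (n : ℕ) (ω : Ω) :
    ∑ j, B n j ω = ∑ j, B 0 j ω + n * #G.edgeFinset := by
  induction n with
  | zero => simp
  | succ n ih =>
    rw [sum_congr rfl fun j _ => h.B_succ n j ω, sum_add_distrib, ih,
      ← card_eq_sum_card_fiberwise fun e _ => mem_univ (choice (n + 1) e ω)]
    ring

theorem B_le (h : IsGraphUrn G μ choice B ℱ) {N₀ : ℕ} (hN₀ : ∀ ω, N₀ = ∑ j, B 0 j ω) (n : ℕ)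
    (i : Fin m) (ω : Ω) : B n i ω ≤ N₀ + n * #G.edgeFinset := by
  rw [hN₀ ω, ← h.sum_B]
  exact single_le_sum (f := (B n · ω)) (fun _ _ => Nat.zero_le _) (mem_univ i)

theorem filtration_le (h : IsGraphUrn G μ choice B ℱ) (n : ℕ) : ℱ n ≤ m₀ := by
  rw [h.filtration_eq]
  exact iSup₂_le fun k _ => iSup₂_le fun e _ => measurable_iff_comap_le.1 (h.measurable_choice k e)

theorem filtration_mono (h : IsGraphUrn G μ choice B ℱ) : Monotone ℱ := fun a b hab => by
  simp only [h.filtration_eq]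
  exact iSup₂_mono' fun k hk => ⟨k, hk.trans hab, le_rfl⟩

theorem measurable_choice_filtration (h : IsGraphUrn G μ choice B ℱ) {k n : ℕ} (hkn : k ≤ n)
    {e : Sym2 (Fin m)} (he : e ∈ G.edgeFinset) : Measurable[ℱ n] (choice k e) := by
  rw [measurable_iff_comap_le, h.filtration_eq]
  exact le_iSup₂_of_le k hkn (le_iSup₂_of_le e he le_rfl)

theorem measurable_B (h : IsGraphUrn G μ choice B ℱ) (n : ℕ) (i : Fin m) :
    Measurable[ℱ n] fun ω => (B n i ω : ℝ) := by
  refine measurable_from_top.comp ?_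
  induction n with
  | zero => exact @measurable_const' ℕ Ω _ (ℱ 0) (B 0 i) (h.B_zero_eq i)
  | succ n ih =>
    have hB : B (n + 1) i = fun ω => B n i ω +
        ∑ e ∈ G.edgeFinset, if choice (n + 1) e ω = i then 1 else 0 := by
      ext ω; rw [h.B_succ, card_filter]
    rw [hB]
    exact (ih.mono (h.filtration_mono n.le_succ) le_rfl).add <| Finset.measurable_sum _
      fun e he => (measurable_from_top (f := fun j : Fin m => if j = i then 1 else 0)).comp
        (h.measurable_choice_filtration le_rfl he)

theorem measurable_invNeighborSum (h : IsGraphUrn G μ choice B ℱ) (n : ℕ) (i : Fin m) :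
    Measurable[ℱ n] fun ω => invNeighborSum G (fun j => (B n j ω : ℝ)) i :=
  Finset.measurable_sum _ fun j _ => ((h.measurable_B n i).add (h.measurable_B n j)).inv

theorem integrable_inv_B (h : IsGraphUrn G μ choice B ℱ) [IsFiniteMeasure μ] (n : ℕ)
    (i : Fin m) : Integrable (fun ω => (B n i ω : ℝ)⁻¹) μ := by
  refine .of_bound ((h.measurable_B n i).inv.mono (h.filtration_le n) le_rfl).aestronglyMeasurable
    1 (ae_of_all _ fun ω => ?_)
  rw [Real.norm_eq_abs, abs_inv, Nat.abs_cast]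
  exact inv_le_one_of_one_le₀ (by exact_mod_cast h.one_le_B n i ω)

theorem condExp_indicator_choice (h : IsGraphUrn G μ choice B ℱ) [IsFiniteMeasure μ] (n : ℕ)
    {e : Sym2 (Fin m)} (he : e ∈ G.edgeFinset) {v : Fin m} (hv : v ∈ e) :
    μ[{ω | choice (n + 1) e ω = v}.indicator (fun _ => (1 : ℝ)) | ℱ n]
      =ᵐ[μ] fun ω => (B n v ω : ℝ) / pairSum (fun j => (B n j ω : ℝ)) e := by
  have hjoint_meas : ∀ f : Sym2 (Fin m) → Fin m,
      MeasurableSet {ω | ∀ e ∈ G.edgeFinset, choice (n + 1) e ω = f e} := fun f => by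
    simp only [Set.ofPred_forall]
    exact .biInter (Set.to_countable _) fun e _ =>
      h.measurable_choice (n + 1) e (measurableSet_singleton _)
  refine condExp_indicator_eq_of_condExp_joint (E := G.edgeFinset) (X := fun e => choice (n + 1) e)
    (t := fun e => univ.filter (· ∈ e))
    (P := fun e u ω => (B n u ω : ℝ) / pairSum (fun j => (B n j ω : ℝ)) e)
    hjoint_meas (fun e he ω => by simpa using h.choice_mem (n + 1) e ω he) (fun e he ω => ?_)
    (fun f hf => h.condExp_choice n f fun e he => by simpa using hf e he) he (by simpa using hv)
  exact sum_div_pairSum_eq_one (fun j => by exact_mod_cast h.one_le_B n j ω)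
    (G.not_isDiag_of_mem_edgeSet (G.mem_edgeFinset.1 he))

theorem condExp_card_choice (h : IsGraphUrn G μ choice B ℱ) [IsFiniteMeasure μ] (n : ℕ)
    (i : Fin m) :
    μ[fun ω => (#{e ∈ G.edgeFinset | choice (n + 1) e ω = i} : ℝ) | ℱ n]
      =ᵐ[μ] fun ω => (B n i ω : ℝ) * invNeighborSum G (fun j => (B n j ω : ℝ)) i := by
  have hinc : ∀ e ∈ G.incidenceFinset i, e ∈ G.edgeFinset ∧ i ∈ e := by
    simp [SimpleGraph.incidenceFinset_eq_filter]
  have hcard : (fun ω => (#{e ∈ G.edgeFinset | choice (n + 1) e ω = i} : ℝ))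
      = ∑ e ∈ G.incidenceFinset i, {ω | choice (n + 1) e ω = i}.indicator (fun _ => (1 : ℝ)) := by
    ext ω
    rw [Finset.sum_apply, SimpleGraph.incidenceFinset_eq_filter, sum_filter, card_filter]
    push_cast
    refine sum_congr rfl fun e he => ?_
    by_cases hi : choice (n + 1) e ω = i
    · rw [if_pos hi, if_pos (hi ▸ h.choice_mem (n + 1) e ω he),
        Set.indicator_of_mem (show ω ∈ {ω | choice (n + 1) e ω = i} from hi)]
    · rw [if_neg hi, Set.indicator_of_notMem (show ω ∉ {ω | choice (n + 1) e ω = i} from hi),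
        ite_self]
  have hmarg : ∀ᵐ ω ∂μ, ∀ e ∈ G.incidenceFinset i,
      μ[{ω | choice (n + 1) e ω = i}.indicator (fun _ => (1 : ℝ)) | ℱ n] ω
        = (B n i ω : ℝ) / pairSum (fun j => (B n j ω : ℝ)) e :=
    (eventually_all_finset _).2 fun e he =>
      h.condExp_indicator_choice n (hinc e he).1 (hinc e he).2
  rw [hcard]
  have hint : ∀ e ∈ G.incidenceFinset i,
      Integrable ({ω | choice (n + 1) e ω = i}.indicator (fun _ => (1 : ℝ))) μ :=
    fun e _ => (integrable_const (1 : ℝ)).indicator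
      (h.measurable_choice (n + 1) e (measurableSet_singleton i))
  filter_upwards [condExp_finsetSum hint (ℱ n), hmarg] with ω hsum hω
  rw [hsum, Finset.sum_apply, sum_congr rfl hω]
  exact sum_incidenceFinset_div_pairSum (fun j => (B n j ω : ℝ)) i

theorem integrable_card_choice (h : IsGraphUrn G μ choice B ℱ) [IsFiniteMeasure μ] (n : ℕ)
    (i : Fin m) : Integrable (fun ω => (#{e ∈ G.edgeFinset | choice (n + 1) e ω = i} : ℝ)) μ := by
  refine .of_bound ?_ #G.edgeFinset (ae_of_all _ fun ω => ?_)
  · simp only [card_filter, Nat.cast_sum]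
    exact (Finset.measurable_sum _ fun e _ =>
      (measurable_from_top (f := fun j : Fin m => ((if j = i then 1 else 0 : ℕ) : ℝ))).comp
        (h.measurable_choice (n + 1) e)).aestronglyMeasurable
  · rw [Real.norm_of_nonneg (by positivity)]
    exact Nat.cast_le.2 (card_filter_le _ _)

theorem condExp_inv_B_succ_le (h : IsGraphUrn G μ choice B ℱ) [IsFiniteMeasure μ] (n : ℕ)
    (i : Fin m) :
    μ[fun ω => (B (n + 1) i ω : ℝ)⁻¹ | ℱ n] ≤ᵐ[μ] fun ω => (B n i ω : ℝ)⁻¹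
      - invNeighborSum G (fun j => (B n j ω : ℝ)) i / (B n i ω + #G.edgeFinset) := by
  set N : ℝ := (#G.edgeFinset : ℝ)
  set b : Ω → ℝ := fun ω => B n i ω
  set D : Ω → ℝ := fun ω => #{e ∈ G.edgeFinset | choice (n + 1) e ω = i}
  set c : Ω → ℝ := fun ω => (b ω * (b ω + N))⁻¹
  have hb : ∀ ω, 1 ≤ b ω := fun ω => Nat.one_le_cast.2 (h.one_le_B n i ω)
  have hD : ∀ ω, 0 ≤ D ω ∧ D ω ≤ N := fun ω => ⟨by positivity, Nat.cast_le.2 (card_filter_le _ _)⟩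
  have hc : ∀ ω, 0 ≤ c ω ∧ c ω ≤ 1 := fun ω =>
    ⟨by have := hb ω; positivity, inv_le_one_of_one_le₀ (by nlinarith [hb ω, hD ω])⟩
  have hbm : Measurable[ℱ n] b := h.measurable_B n i
  have hcm : Measurable[ℱ n] c := (hbm.mul (hbm.add_const N)).inv
  have hDi : Integrable D μ := h.integrable_card_choice n i
  have hcDi : Integrable (c * D) μ :=
    hDi.bdd_mul (hcm.mono (h.filtration_le n) le_rfl).aestronglyMeasurable
      (ae_of_all _ fun ω => by rw [Real.norm_of_nonneg (hc ω).1]; exact (hc ω).2)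
  have hbi : Integrable b⁻¹ μ := h.integrable_inv_B n i
  have hstep : ∀ ω, (B (n + 1) i ω : ℝ)⁻¹ ≤ (b⁻¹ - c * D) ω := fun ω => by
    have := inv_add_le_inv_sub_div (by linarith [hb ω]) (hD ω).1 (hD ω).2
    simp only [h.B_succ, Nat.cast_add, Pi.sub_apply, Pi.mul_apply, Pi.inv_apply]
    rwa [div_eq_inv_mul] at this
  have hmono := condExp_mono (m := ℱ n) (h.integrable_inv_B (n + 1) i) (hbi.sub hcDi)
    (ae_of_all _ hstep)
  have hb_cond : μ[b⁻¹ | ℱ n] = b⁻¹ :=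
    condExp_of_stronglyMeasurable (h.filtration_le n) hbm.inv.stronglyMeasurable hbi
  filter_upwards [hmono, condExp_sub hbi hcDi (ℱ n),
    condExp_mul_of_stronglyMeasurable_left hcm.stronglyMeasurable hcDi hDi,
    h.condExp_card_choice n i] with ω hle hsub hmul hcard
  rw [hsub, Pi.sub_apply, hb_cond, hmul, Pi.mul_apply, hcard] at hle
  refine hle.trans_eq ?_
  have hb0 : 0 < (B n i ω : ℝ) := by linarith [hb ω]
  have hbN : 0 < (B n i ω : ℝ) + N := by positivity
  simp only [c, b, Pi.inv_apply]
  field_simp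

theorem measurableSet_driftEvent (h : IsGraphUrn G μ choice B ℱ) (i : Fin m) (K : ℕ)
    (ℓ : ℕ → ℝ) {n₀ n : ℕ} (hn : n₀ ≤ n) : MeasurableSet[ℱ n] (driftEvent G B i K ℓ n₀ n) := by
  have hset : driftEvent G B i K ℓ n₀ n = {ω | (K : ℝ) ≤ B n₀ i ω} ∩
      ⋂ k ∈ Icc n₀ n, {ω | ℓ k ≤ invNeighborSum G (fun j => (B k j ω : ℝ)) i} := by
    ext ω; simp [driftEvent]
  rw [hset]
  refine .inter (measurableSet_le measurable_const
    ((h.measurable_B n₀ i).mono (h.filtration_mono hn) le_rfl))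
    (Finset.measurableSet_biInter _ fun k hk => measurableSet_le measurable_const
      ((h.measurable_invNeighborSum k i).mono (h.filtration_mono (mem_Icc.1 hk).2) le_rfl))

theorem setIntegral_driftEvent_le (h : IsGraphUrn G μ choice B ℱ) [IsFiniteMeasure μ]
    (i : Fin m) {K : ℕ} (hK : 1 ≤ K) {ℓ : ℕ → ℝ} (hℓ : ∀ k, 0 ≤ ℓ k) {n₀ n : ℕ}
    (hcap : ∀ k ≥ n₀, K / (K + #G.edgeFinset) * ℓ k ≤ 1) (hn : n₀ ≤ n) :
    ∫ ω in driftEvent G B i K ℓ n₀ n, (B n i ω : ℝ)⁻¹ ∂μ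
      ≤ (∏ k ∈ Ico n₀ n, (1 - K / (K + #G.edgeFinset) * ℓ k))
        * ∫ ω in driftEvent G B i K ℓ n₀ n₀, (B n₀ i ω : ℝ)⁻¹ ∂μ := by
  refine setIntegral_le_prod_mul_of_condExp_le h.filtration_le (h.integrable_inv_B · i)
    (fun n ω => by positivity) (fun n hn => h.measurableSet_driftEvent i K ℓ hn)
    (fun n _ ω hω => ⟨hω.1, fun k hk => hω.2 k (Icc_subset_Icc_right n.le_succ hk)⟩) hcap
    (fun n hn => ?_) hn
  filter_upwards [h.condExp_inv_B_succ_le n i] with ω hω hmem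
  refine hω.trans (inv_sub_div_le_one_sub_mul_mul_inv (by exact_mod_cast hK) ?_ (by positivity)
    (hℓ n) (hmem.2 n (right_mem_Icc.2 hn)))
  exact_mod_cast hmem.1.trans (h.monotone_B i ω hn)

theorem setIntegral_driftEvent_le_rpow (h : IsGraphUrn G μ choice B ℱ) [IsFiniteMeasure μ]
    (i : Fin m) {K : ℕ} (hK : 1 ≤ K) (hE : 0 < #G.edgeFinset) {a L : ℝ} (ha : 0 ≤ a)
    (hL : 0 < L) {n₀ n : ℕ} (hcap : L ≤ a + n₀ * #G.edgeFinset) (hn : n₀ ≤ n) :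
    ∫ ω in driftEvent G B i K (fun k => L / (a + k * #G.edgeFinset)) n₀ n, (B n i ω : ℝ)⁻¹ ∂μ
      ≤ ((a + n₀ * #G.edgeFinset) / (a + n * #G.edgeFinset))
          ^ (K / (K + #G.edgeFinset) * L / #G.edgeFinset)
        * ∫ ω in driftEvent G B i K (fun k => L / (a + k * #G.edgeFinset)) n₀ n₀,
            (B n₀ i ω : ℝ)⁻¹ ∂μ := by
  have hN : (0 : ℝ) < #G.edgeFinset := Nat.cast_pos.2 hE
  have hκ : (0 : ℝ) < K / (K + #G.edgeFinset) ∧ (K : ℝ) / (K + #G.edgeFinset) ≤ 1 := by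
    have : (0 : ℝ) < K := by exact_mod_cast hK
    exact ⟨by positivity, (div_le_one (by positivity)).2 (by linarith)⟩
  have hcap' : ∀ k ≥ n₀, K / (K + #G.edgeFinset) * L ≤ a + k * #G.edgeFinset := fun k hk =>
    calc K / (K + #G.edgeFinset) * L ≤ L := mul_le_of_le_one_left hL.le hκ.2
      _ ≤ a + n₀ * #G.edgeFinset := hcap
      _ ≤ a + k * #G.edgeFinset := by gcongr
  have hκL : (0 : ℝ) < K / (K + #G.edgeFinset) * L := mul_pos hκ.1 hL
  refine (h.setIntegral_driftEvent_le i hK (fun k => by positivity) (fun k hk => ?_) hn).trans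
    (mul_le_mul_of_nonneg_right ?_ (integral_nonneg fun ω => by positivity))
  · rw [← mul_div_assoc, div_le_one (hκL.trans_le (hcap' k hk))]
    exact hcap' k hk
  · calc ∏ k ∈ Ico n₀ n, (1 - K / (K + #G.edgeFinset) * (L / (a + k * #G.edgeFinset)))
        = ∏ k ∈ Ico n₀ n, (1 - K / (K + #G.edgeFinset) * L / #G.edgeFinset * #G.edgeFinset
            / (a + k * #G.edgeFinset)) :=
          prod_congr rfl fun k _ => by rw [div_mul_cancel₀ _ hN.ne', mul_div_assoc]
      _ ≤ _ := prod_Ico_one_sub_le_rpow (hκL.trans_le (hcap' n₀ le_rfl)) hN.le (by positivity)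
          (by rw [div_mul_cancel₀ _ hN.ne']; exact hcap' n₀ le_rfl) hn

theorem exists_measureReal_mul_le_rpow_neg (h : IsGraphUrn G μ choice B ℱ) [IsFiniteMeasure μ]
    (i : Fin m) {K : ℕ} (hK : 1 ≤ K) (hE : 0 < #G.edgeFinset) {N₀ : ℕ} {L : ℝ} (hL : 0 < L)
    {n₀ : ℕ} (hcap : L ≤ N₀ + n₀ * #G.edgeFinset) {T : Set Ω}
    (hT : T ⊆ {ω | K ≤ B n₀ i ω ∧ ∀ k ≥ n₀,
      L / (N₀ + k * #G.edgeFinset) ≤ invNeighborSum G (fun j => (B k j ω : ℝ)) i})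
    {ε : ℕ → ℝ} (hε : ∀ n ≥ n₀, ∀ ω ∈ T, ε n ≤ (B n i ω : ℝ)⁻¹) :
    ∃ C, ∀ n ≥ n₀, μ.real T * ε n
      ≤ C * (N₀ + n * #G.edgeFinset) ^ (-(K / (K + #G.edgeFinset) * L / #G.edgeFinset)) := by
  set β : ℝ := K / (K + #G.edgeFinset) * L / #G.edgeFinset
  set C₀ := ∫ ω in driftEvent G B i K (fun k => L / (N₀ + k * #G.edgeFinset)) n₀ n₀,
    (B n₀ i ω : ℝ)⁻¹ ∂μ
  refine ⟨(N₀ + n₀ * #G.edgeFinset) ^ β * C₀, fun n hn => ?_⟩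
  have hx : (0 : ℝ) < N₀ + n₀ * #G.edgeFinset := hL.trans_le hcap
  have hy : (0 : ℝ) < N₀ + n * #G.edgeFinset := hx.trans_le (by gcongr)
  calc μ.real T * ε n
      ≤ ∫ ω in driftEvent G B i K (fun k => L / (N₀ + k * #G.edgeFinset)) n₀ n,
          (B n i ω : ℝ)⁻¹ ∂μ :=
        measureReal_mul_le_setIntegral (fun ω => by positivity) (h.integrable_inv_B n i)
          (fun ω hω => ⟨(hT hω).1, fun k hk => (hT hω).2 k (mem_Icc.1 hk).1⟩) (hε n hn)
    _ ≤ ((N₀ + n₀ * #G.edgeFinset) / (N₀ + n * #G.edgeFinset)) ^ β * C₀ :=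
        h.setIntegral_driftEvent_le_rpow i hK hE (Nat.cast_nonneg N₀) hL hcap hn
    _ = (N₀ + n₀ * #G.edgeFinset) ^ β * C₀ * (N₀ + n * #G.edgeFinset) ^ (-β) := by
        rw [Real.div_rpow hx.le hy.le, Real.rpow_neg hy.le]
        ring

theorem measure_le_B_and_drift_eq_zero (h : IsGraphUrn G μ choice B ℱ) [IsFiniteMeasure μ]
    {N₀ : ℕ} (hN₀ : ∀ ω, N₀ = ∑ j, B 0 j ω) (i : Fin m) {K : ℕ} (hK : 1 ≤ K)
    (hE : 0 < #G.edgeFinset) {L : ℝ} (hL : 0 < L) {n₀ : ℕ} (hcap : L ≤ N₀ + n₀ * #G.edgeFinset)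
    (hβ : 1 < K / (K + #G.edgeFinset) * L / #G.edgeFinset) :
    μ {ω | K ≤ B n₀ i ω ∧ ∀ k ≥ n₀,
      L / (N₀ + k * #G.edgeFinset) ≤ invNeighborSum G (fun j => (B k j ω : ℝ)) i} = 0 := by
  have hy : ∀ n ≥ n₀, (0 : ℝ) < N₀ + n * #G.edgeFinset := fun n hn =>
    (hL.trans_le hcap).trans_le (by gcongr)
  obtain ⟨C, hC⟩ := h.exists_measureReal_mul_le_rpow_neg i hK hE hL hcap subset_rfl
    (ε := fun n => ((N₀ : ℝ) + n * #G.edgeFinset)⁻¹) fun n _ ω _ =>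
      inv_anti₀ (by exact_mod_cast h.one_le_B n i ω) (by exact_mod_cast h.B_le hN₀ n i ω)
  refine (measureReal_eq_zero_iff).1 (le_antisymm ?_ measureReal_nonneg)
  refine le_zero_of_forall_le_mul_rpow_neg (Nat.cast_pos.2 hE) (sub_pos.2 hβ) (a := N₀)
    (C := C) (n₀ := n₀) fun n hn => ?_
  have hCn := hC n hn
  rw [← div_eq_mul_inv, div_le_iff₀ (hy n hn)] at hCn
  refine hCn.trans_eq ?_
  rw [mul_assoc, ← Real.rpow_add_one (hy n hn).ne']
  ring_nf

theorem measure_drift_and_B_le_eq_zero (h : IsGraphUrn G μ choice B ℱ) [IsFiniteMeasure μ]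
    {N₀ : ℕ} (i : Fin m) {K : ℕ} (hK : 1 ≤ K) (hE : 0 < #G.edgeFinset) {L : ℝ} (hL : 0 < L)
    {n₀ : ℕ} (hcap : L ≤ N₀ + n₀ * #G.edgeFinset) :
    μ {ω | ∀ k ≥ n₀, L / (N₀ + k * #G.edgeFinset) ≤ invNeighborSum G (fun j => (B k j ω : ℝ)) i
      ∧ B k i ω ≤ K} = 0 := by
  have hK0 : (0 : ℝ) < K := by exact_mod_cast hK
  obtain ⟨C, hC⟩ := h.exists_measureReal_mul_le_rpow_neg i le_rfl hE hL hcap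
    (T := {ω | ∀ k ≥ n₀, L / (N₀ + k * #G.edgeFinset)
      ≤ invNeighborSum G (fun j => (B k j ω : ℝ)) i ∧ B k i ω ≤ K})
    (fun ω hω => ⟨h.one_le_B n₀ i ω, fun k hk => (hω k hk).1⟩) (ε := fun _ => (K : ℝ)⁻¹)
    fun n hn ω hω => inv_anti₀ (by exact_mod_cast h.one_le_B n i ω) (by exact_mod_cast (hω n hn).2)
  refine (measureReal_eq_zero_iff).1 (le_antisymm ?_ measureReal_nonneg)
  refine le_zero_of_forall_le_mul_rpow_neg (Nat.cast_pos.2 hE)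
    (γ := ((1 : ℕ) : ℝ) / ((1 : ℕ) + #G.edgeFinset) * L / #G.edgeFinset) (by positivity)
    (a := N₀) (C := K * C) (n₀ := n₀) fun n hn => ?_
  have hCn := hC n hn
  rw [← div_eq_mul_inv, div_le_iff₀ hK0] at hCn
  exact hCn.trans_eq (by ring)

theorem setOf_tendsto_subset (h : IsGraphUrn G μ choice B ℱ) {N₀ : ℕ}
    {x : ℕ → Ω → Fin m → ℝ}
    (hx : ∀ n ω i, x n ω i = (B n i ω : ℝ) / ((N₀ : ℝ) + (n : ℝ) * (#G.edgeFinset : ℝ)))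
    (hE : 0 < #G.edgeFinset) {w : Fin m → ℝ} {i : Fin m} (hw : ∀ j, G.Adj i j → w i + w j ≠ 0)
    {L : ℝ} (hL : L < invNeighborSum G w i) (K M : ℕ) :
    {ω | Tendsto (fun n => x n ω) atTop (nhds w)} ⊆ ⋃ n₀,
      ({ω | K ≤ B (M + n₀) i ω ∧ ∀ k ≥ M + n₀,
          L / (N₀ + k * #G.edgeFinset) ≤ invNeighborSum G (fun j => (B k j ω : ℝ)) i} ∪
        {ω | ∀ k ≥ M + n₀, L / (N₀ + k * #G.edgeFinset)
          ≤ invNeighborSum G (fun j => (B k j ω : ℝ)) i ∧ B k i ω ≤ K}) := by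
  intro ω hω
  have hdrift : ∀ᶠ k in atTop,
      L / (N₀ + k * #G.edgeFinset) ≤ invNeighborSum G (fun j => (B k j ω : ℝ)) i := by
    filter_upwards [((continuousAt_invNeighborSum hw).tendsto.comp hω).eventually_const_lt hL,
      eventually_ge_atTop 1] with k hk hk1
    have hy : (0 : ℝ) < N₀ + k * #G.edgeFinset := by
      have : (1 : ℝ) ≤ k := by exact_mod_cast hk1
      have : (1 : ℝ) ≤ #G.edgeFinset := by exact_mod_cast hE
      positivity
    have hB : (fun j => (B k j ω : ℝ)) = ((N₀ : ℝ) + k * #G.edgeFinset) • x k ω := by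
      ext j; rw [Pi.smul_apply, hx, smul_eq_mul, mul_div_cancel₀ _ hy.ne']
    rw [hB, invNeighborSum_smul, div_eq_inv_mul]
    exact mul_le_mul_of_nonneg_left hk.le (inv_nonneg.2 hy.le)
  obtain ⟨n₁, hn₁⟩ := eventually_atTop.1 hdrift
  by_cases hK : ∃ n, K ≤ B n i ω
  · obtain ⟨n₂, hn₂⟩ := hK
    exact Set.mem_iUnion.2 ⟨n₁ + n₂, Or.inl
      ⟨hn₂.trans (h.monotone_B i ω (by omega)), fun k hk => hn₁ k (by omega)⟩⟩
  · simp only [not_exists, not_le] at hK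
    exact Set.mem_iUnion.2 ⟨n₁, Or.inr fun k hk => ⟨hn₁ k (by omega), (hK k).le⟩⟩

end IsGraphUrn

theorem polya_urn_nonconvergence_to_unstable_general
    {m : ℕ} (G : SimpleGraph (Fin m)) [DecidableRel G.Adj]
    (N : ℕ) (hN : N = G.edgeFinset.card)
    (c : ℝ) (hc0 : 0 < c)
    {Ω : Type} [MeasurableSpace Ω] (μ : Measure Ω) [IsProbabilityMeasure μ]
    -- `choice n e` is the endpoint of edge `e` receiving the ball at step `n`
    (choice : ℕ → Sym2 (Fin m) → Ω → Fin m)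
    (hmeas : ∀ n e, Measurable (choice n e))
    (hmem : ∀ n e ω, e ∈ G.edgeFinset → choice n e ω ∈ e)
    -- `B n i` is the number of balls in bin `i` after step `n`
    (B : ℕ → Fin m → Ω → ℕ)
    (hB0pos : ∀ i ω, 1 ≤ B 0 i ω)
    (hB0det : ∀ i ω ω', B 0 i ω = B 0 i ω')
    (hBrec : ∀ n i ω, B (n + 1) i ω
      = B n i ω + (G.edgeFinset.filter fun e => choice (n + 1) e ω = i).card)
    -- the filtration generated by the process up to step `n`
    (ℱ : ℕ → MeasurableSpace Ω)
    (hℱ : ∀ n, ℱ n = ⨆ (k : ℕ) (_ : k ≤ n) (e : Sym2 (Fin m)) (_ : e ∈ G.edgeFinset),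
        MeasurableSpace.comap (choice k e) ⊤)
    -- conditionally on the past, the balls on distinct edges are placed independently, the one
    -- on edge `{i,j}` going to bin `i` with probability `B_i(n)/(B_i(n)+B_j(n))`
    (hlaw : ∀ (n : ℕ) (f : Sym2 (Fin m) → Fin m), (∀ e ∈ G.edgeFinset, f e ∈ e) →
      μ[Set.indicator {ω | ∀ e ∈ G.edgeFinset, choice (n + 1) e ω = f e} (fun _ => (1 : ℝ)) | ℱ n]
        =ᵐ[μ] fun ω => ∏ e ∈ G.edgeFinset,
          (B n (f e) ω : ℝ) / pairSum (fun i => (B n i ω : ℝ)) e)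
    (N0 : ℕ) (hN0 : ∀ ω, N0 = ∑ i, B 0 i ω)
    -- the proportion vector
    (x : ℕ → Ω → Fin m → ℝ)
    (hx : ∀ n ω i, x n ω i = (B n i ω : ℝ) / ((N0 : ℝ) + (n : ℝ) * (N : ℝ))) :
    ∀ w : Fin m → ℝ, w ∈ urnDomain G c → (∀ i, w i * dLyap G N i w = 0) →
      (∃ i, w i = 0 ∧ 0 < dLyap G N i w) →
      μ {ω | Tendsto (fun n => x n ω) atTop (nhds w)} = 0 := by
  rintro w hw - ⟨i, -, hunstable⟩
  subst hN
  have h : IsGraphUrn G μ choice B ℱ := ⟨hmeas, hmem, hB0pos, hB0det, hBrec, hℱ, hlaw⟩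
  have hE : 0 < #G.edgeFinset := Nat.pos_of_ne_zero fun hE => by
    norm_num [dLyap, hE] at hunstable
  have hN : (0 : ℝ) < #G.edgeFinset := Nat.cast_pos.2 hE
  rw [dLyap_eq, lt_neg_add_iff_add_lt, add_zero] at hunstable
  obtain ⟨r, hr1, hrS⟩ := exists_between hunstable
  obtain ⟨K, hK, hKr⟩ := exists_one_lt_div_add_mul (r := #G.edgeFinset) hr1
  have hL : (0 : ℝ) < #G.edgeFinset * r := by positivity
  have hcap : ∀ n₀ : ℕ, #G.edgeFinset * r ≤ N0 + ((⌈r⌉₊ + n₀ : ℕ) : ℝ) * #G.edgeFinset :=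
    fun n₀ => calc
      _ ≤ (#G.edgeFinset : ℝ) * ⌈r⌉₊ := by gcongr; exact Nat.le_ceil r
      _ ≤ N0 + ((⌈r⌉₊ + n₀ : ℕ) : ℝ) * #G.edgeFinset := by push_cast; nlinarith
  refine measure_mono_null (h.setOf_tendsto_subset hx hE
    (fun j hj => (hc0.trans_le (hw.2.2 i j hj)).ne') ((lt_div_iff₀' hN).1 hrS) K ⌈r⌉₊)
    (measure_iUnion_null fun n₀ => measure_union_null ?_ ?_)
  · exact h.measure_le_B_and_drift_eq_zero hN0 i hK hE hL (hcap n₀)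
      (by rwa [mul_div_assoc, mul_div_cancel_left₀ _ hN.ne'])
  · exact h.measure_drift_and_B_le_eq_zero i hK hE hL (hcap n₀)

/-- If `w ∈ Δ` is an unstable equilibrium, i.e. an equilibrium such that
`w_i = 0` and `∂L/∂v_i(w) > 0` for some `i`, then the graph-based Pólya urn converges to `w`
with probability zero. -/
theorem polya_urn_nonconvergence_to_unstable
    {m : ℕ} (hm : 2 ≤ m) (G : SimpleGraph (Fin m)) [DecidableRel G.Adj]
    (hconn : G.Connected)
    (N : ℕ) (hN : N = G.edgeFinset.card)
    (c : ℝ) (hc0 : 0 < c) (hc1 : c < 1 / (N : ℝ))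
    {Ω : Type} [MeasurableSpace Ω] (μ : Measure Ω) [IsProbabilityMeasure μ]
    -- `choice n e` is the endpoint of edge `e` receiving the ball at step `n`
    (choice : ℕ → Sym2 (Fin m) → Ω → Fin m)
    (hmeas : ∀ n e, Measurable (choice n e))
    (hmem : ∀ n e ω, e ∈ G.edgeFinset → choice n e ω ∈ e)
    -- `B n i` is the number of balls in bin `i` after step `n`
    (B : ℕ → Fin m → Ω → ℕ)
    (hB0pos : ∀ i ω, 1 ≤ B 0 i ω)
    (hB0det : ∀ i ω ω', B 0 i ω = B 0 i ω')
    (hBrec : ∀ n i ω, B (n + 1) i ω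
      = B n i ω + (G.edgeFinset.filter fun e => choice (n + 1) e ω = i).card)
    -- the filtration generated by the process up to step `n`
    (ℱ : ℕ → MeasurableSpace Ω)
    (hℱ : ∀ n, ℱ n = ⨆ (k : ℕ) (_ : k ≤ n) (e : Sym2 (Fin m)) (_ : e ∈ G.edgeFinset),
        MeasurableSpace.comap (choice k e) ⊤)
    -- conditionally on the past, the balls on distinct edges are placed independently, the one
    -- on edge `{i,j}` going to bin `i` with probability `B_i(n)/(B_i(n)+B_j(n))`
    (hlaw : ∀ (n : ℕ) (f : Sym2 (Fin m) → Fin m), (∀ e ∈ G.edgeFinset, f e ∈ e) →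
      μ[Set.indicator {ω | ∀ e ∈ G.edgeFinset, choice (n + 1) e ω = f e} (fun _ => (1 : ℝ)) | ℱ n]
        =ᵐ[μ] fun ω => ∏ e ∈ G.edgeFinset,
          (B n (f e) ω : ℝ) / pairSum (fun i => (B n i ω : ℝ)) e)
    (N0 : ℕ) (hN0 : ∀ ω, N0 = ∑ i, B 0 i ω)
    -- the proportion vector
    (x : ℕ → Ω → Fin m → ℝ)
    (hx : ∀ n ω i, x n ω i = (B n i ω : ℝ) / ((N0 : ℝ) + (n : ℝ) * (N : ℝ))) :
    ∀ w : Fin m → ℝ, w ∈ urnDomain G c → (∀ i, w i * dLyap G N i w = 0) →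
      (∃ i, w i = 0 ∧ 0 < dLyap G N i w) →
      μ {ω | Tendsto (fun n => x n ω) atTop (nhds w)} = 0 :=
  polya_urn_nonconvergence_to_unstable_general G N hN c hc0 μ choice hmeas hmem B hB0pos hB0det
    hBrec ℱ hℱ hlaw N0 hN0 x hx
end

section
/- The function L is a strict Lyapunov function for F: if v : I → Δ is a differentiable curve defined on an interval I ⊆ ℝ satisfying v'(t) = F(v(t)) for all t ∈ I, then (d/dt) L(v(t)) = Σ_{i=1}^m v_i(t) (∂L/∂v_i(v(t)))² ≥ 0 for all t ∈ I; in particular t ↦ L(v(t)) is monotone nondecreasing, and (d/dt) L(v(t)) = 0 at some t if and only if F(v(t)) = 0, i.e. v(t) is an equilibrium. -/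
/-!
Along a curve `v` the chain rule gives `(d/dt) L(v) = Σ_i ∂L/∂v_i(v) · v_i'`; for the edge sum this
comes from splitting each edge `{i,j}` into its two darts, so that
`Σ_{{i,j} ∈ E} (u_i + u_j)/(v_i + v_j) = Σ_i u_i Σ_{j ∼ i} 1/(v_i + v_j)`.
Substituting `v_i' = v_i ∂L/∂v_i` turns this into `Σ_i v_i (∂L/∂v_i)²`, which is nonnegative on `Δ`
and vanishes exactly when every `v_i ∂L/∂v_i` does; monotonicity then follows from the mean value
theorem.
-/

open Filter Finset

/-- The function `L(v) = -Σ_i v_i + (1/N) Σ_{{i,j} ∈ E} log (v_i + v_j)`. -/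
noncomputable def lyap {m : ℕ} (G : SimpleGraph (Fin m)) [DecidableRel G.Adj] (N : ℕ)
    (v : Fin m → ℝ) : ℝ :=
  -∑ i, v i + (1 / (N : ℝ)) * ∑ e ∈ G.edgeFinset, Real.log (pairSum v e)

namespace SimpleGraph

variable {V M : Type*} [Fintype V] [AddCommMonoid M] (G : SimpleGraph V) [DecidableRel G.Adj]

theorem sum_darts_eq_sum_neighborFinset (f : V → V → M) :
    ∑ d : G.Dart, f d.fst d.snd = ∑ v, ∑ w ∈ G.neighborFinset v, f v w := by
  classical
  rw [← sum_fiberwise univ (fun d : G.Dart => d.fst)]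
  refine sum_congr rfl fun v _ => ?_
  rw [filter_congr_decidable, G.dart_fst_fiber v,
    sum_image fun _ _ _ _ h => G.dartOfNeighborSet_injective v h]
  exact (sum_subtype _ (fun w => mem_neighborFinset G v w) (f v)).symm

theorem sum_edgeFinset_lift_add_eq_sum_darts (f : V → V → M) :
    ∑ e ∈ G.edgeFinset, Sym2.lift ⟨fun v w => f v w + f w v, fun _ _ => add_comm _ _⟩ e
      = ∑ d : G.Dart, f d.fst d.snd := by
  classical
  rw [← sum_fiberwise_of_maps_to (g := Dart.edge) (t := G.edgeFinset)
    fun d _ => mem_edgeFinset.2 d.edge_mem]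
  refine sum_congr rfl fun e he => ?_
  induction e using Sym2.ind with
  | _ v w =>
    let d : G.Dart := ⟨(v, w), mem_edgeFinset.1 he⟩
    rw [filter_congr_decidable, show s(v, w) = d.edge from rfl, d.edge_fiber,
      sum_pair d.symm_ne.symm]
    rfl

end SimpleGraph

theorem Finset.sum_mul_sq_eq_zero_iff {ι R : Type*} [CommRing R] [LinearOrder R]
    [IsStrictOrderedRing R] {s : Finset ι} {a b : ι → R} (ha : ∀ i ∈ s, 0 ≤ a i) :
    ∑ i ∈ s, a i * b i ^ 2 = 0 ↔ ∀ i ∈ s, a i * b i = 0 := by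
  rw [sum_eq_zero_iff_of_nonneg fun i hi => mul_nonneg (ha i hi) (sq_nonneg _)]
  simp only [mul_eq_zero, pow_eq_zero_iff two_ne_zero]

section Lyapunov

variable {m : ℕ} (G : SimpleGraph (Fin m)) [DecidableRel G.Adj] (N : ℕ)

theorem sum_edgeFinset_pairSum_div (w u : Fin m → ℝ) :
    ∑ e ∈ G.edgeFinset, pairSum u e / pairSum w e
      = ∑ i, u i * ∑ j ∈ G.neighborFinset i, 1 / (w i + w j) :=
  calc ∑ e ∈ G.edgeFinset, pairSum u e / pairSum w e
      = ∑ e ∈ G.edgeFinset, Sym2.lift ⟨fun i j => u i / (w i + w j) + u j / (w j + w i),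
          fun _ _ => add_comm _ _⟩ e := by
        refine sum_congr rfl fun e _ => e.ind fun i j => ?_
        simp only [pairSum, Sym2.lift_mk, add_comm (w j), add_div]
    _ = ∑ i, ∑ j ∈ G.neighborFinset i, u i / (w i + w j) := by
        rw [G.sum_edgeFinset_lift_add_eq_sum_darts fun i j => u i / (w i + w j),
          G.sum_darts_eq_sum_neighborFinset fun i j => u i / (w i + w j)]
    _ = ∑ i, u i * ∑ j ∈ G.neighborFinset i, 1 / (w i + w j) := by
        simp only [mul_sum, mul_one_div]

theorem HasDerivWithinAt.lyap {v : ℝ → Fin m → ℝ} {u : Fin m → ℝ} {s : Set ℝ} {t : ℝ}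
    (hv : HasDerivWithinAt v u s t) (hne : ∀ i j, G.Adj i j → v t i + v t j ≠ 0) :
    HasDerivWithinAt (fun x => lyap G N (v x)) (∑ i, u i * dLyap G N i (v t)) s t := by
  have hcoord : ∀ i, HasDerivWithinAt (fun x => v x i) (u i) s t := hasDerivWithinAt_pi.1 hv
  have hlog : ∀ e ∈ G.edgeFinset, HasDerivWithinAt (fun x => Real.log (pairSum (v x) e))
      (pairSum u e / pairSum (v t) e) s t := by
    intro e he
    induction e using Sym2.ind with
    | _ i j => exact ((hcoord i).add (hcoord j)).log (hne i j (G.mem_edgeFinset.1 he))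
  refine ((HasDerivWithinAt.fun_sum fun i _ => hcoord i).neg.add
    ((HasDerivWithinAt.fun_sum hlog).const_mul (1 / (N : ℝ)))).congr_deriv ?_
  rw [sum_edgeFinset_pairSum_div, mul_sum, ← sum_neg_distrib, ← sum_add_distrib]
  exact sum_congr rfl fun i _ => by simp only [dLyap]; ring

end Lyapunov

theorem lyap_is_strict_lyapunov_function_general
    {m : ℕ} (G : SimpleGraph (Fin m)) [DecidableRel G.Adj]
    (N : ℕ)
    (c : ℝ) (hc0 : 0 < c)
    (I : Set ℝ) (hI : I.OrdConnected)
    (v : ℝ → Fin m → ℝ)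
    (hvmem : ∀ t ∈ I, v t ∈ urnDomain G c)
    (hode : ∀ t ∈ I, HasDerivWithinAt v (fun i => v t i * dLyap G N i (v t)) I t) :
    (∀ t ∈ I, HasDerivWithinAt (fun s => lyap G N (v s))
        (∑ i, v t i * (dLyap G N i (v t)) ^ 2) I t) ∧
    (∀ t ∈ I, 0 ≤ ∑ i, v t i * (dLyap G N i (v t)) ^ 2) ∧
    (∀ s ∈ I, ∀ t ∈ I, s ≤ t → lyap G N (v s) ≤ lyap G N (v t)) ∧
    (∀ t ∈ I, ((∑ i, v t i * (dLyap G N i (v t)) ^ 2) = 0 ↔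
        ∀ i, v t i * dLyap G N i (v t) = 0)) := by
  have hderiv : ∀ t ∈ I, HasDerivWithinAt (fun s => lyap G N (v s))
      (∑ i, v t i * (dLyap G N i (v t)) ^ 2) I t := fun t ht => by
    have hne : ∀ i j, G.Adj i j → v t i + v t j ≠ 0 := fun i j hij =>
      (hc0.trans_le ((hvmem t ht).2.2 i j hij)).ne'
    simpa only [mul_assoc, ← sq] using (hode t ht).lyap G N hne
  have hnonneg : ∀ t ∈ I, 0 ≤ ∑ i, v t i * (dLyap G N i (v t)) ^ 2 := fun t ht =>
    sum_nonneg fun i _ => mul_nonneg ((hvmem t ht).1 i) (sq_nonneg _)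
  refine ⟨hderiv, hnonneg, fun s hs t ht hst => ?_, fun t ht => ?_⟩
  · exact monotoneOn_of_hasDerivWithinAt_nonneg hI.convex
      (fun x hx => (hderiv x hx).continuousWithinAt)
      (fun x hx => (hderiv x (interior_subset hx)).mono interior_subset)
      (fun x hx => hnonneg x (interior_subset hx)) hs ht hst
  · simpa only [mem_univ, true_implies] using
      sum_mul_sq_eq_zero_iff (s := univ) (b := fun i => dLyap G N i (v t))
        fun i _ => (hvmem t ht).1 i

/-- `L` is a strict Lyapunov function for the vector field
`F_i(v) = v_i ∂L/∂v_i(v)`: along any solution curve `v` of `v' = F(v)` in `Δ`,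
`(d/dt) L(v(t)) = Σ_i v_i(t) (∂L/∂v_i(v(t)))² ≥ 0`, so `t ↦ L(v(t))` is nondecreasing, and the
derivative vanishes at `t` iff `v(t)` is an equilibrium, i.e. `F(v(t)) = 0`. -/
theorem lyap_is_strict_lyapunov_function
    {m : ℕ} (hm : 2 ≤ m) (G : SimpleGraph (Fin m)) [DecidableRel G.Adj]
    (hconn : G.Connected)
    (N : ℕ) (hN : N = G.edgeFinset.card)
    (c : ℝ) (hc0 : 0 < c) (hc1 : c < 1 / (N : ℝ))
    (I : Set ℝ) (hI : I.OrdConnected)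
    (v : ℝ → Fin m → ℝ)
    (hvmem : ∀ t ∈ I, v t ∈ urnDomain G c)
    (hode : ∀ t ∈ I, HasDerivWithinAt v (fun i => v t i * dLyap G N i (v t)) I t) :
    (∀ t ∈ I, HasDerivWithinAt (fun s => lyap G N (v s))
        (∑ i, v t i * (dLyap G N i (v t)) ^ 2) I t) ∧
    (∀ t ∈ I, 0 ≤ ∑ i, v t i * (dLyap G N i (v t)) ^ 2) ∧
    (∀ s ∈ I, ∀ t ∈ I, s ≤ t → lyap G N (v s) ≤ lyap G N (v t)) ∧
    (∀ t ∈ I, ((∑ i, v t i * (dLyap G N i (v t)) ^ 2) = 0 ↔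
        ∀ i, v t i * dLyap G N i (v t) = 0)) :=
  lyap_is_strict_lyapunov_function_general G N c hc0 I hI v hvmem hode
end

section
/- Let w ∈ Δ be a non-unstable equilibrium, i.e. ∂L/∂v_i(w) = 0 for every i with w_i > 0 and ∂L/∂v_i(w) ≤ 0 for every i with w_i = 0. Define f(v) = −1 + (1/N) Σ_{{i,j}∈E} (w_i + w_j)/(v_i + v_j). Then f(w) = 0 and f(v) ≥ 0 for every v ∈ Δ; that is, w is a global minimum of f on Δ and the minimum value is 0. -/
open Finset

open SimpleGraph in
/-- Sum over darts of a function of the endpoints equals the double sum over vertices and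
their neighbors. -/
lemma sum_dart_eq {V : Type*} [Fintype V] (G : SimpleGraph V) [DecidableRel G.Adj]
    (F : V → V → ℝ) :
    ∑ d : G.Dart, F d.fst d.snd = ∑ i, ∑ j ∈ G.neighborFinset i, F i j := by
  rw [Finset.sum_sigma']
  refine (Finset.sum_bij' (fun p hp => (⟨(p.1, p.2), ?_⟩ : G.Dart))
    (fun d _ => ⟨d.fst, d.snd⟩) ?_ ?_ ?_ ?_ ?_).symm
  · exact (G.mem_neighborFinset _ _).mp (Finset.mem_sigma.mp hp).2
  · intro a ha; exact Finset.mem_univ _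
  · intro d _
    exact Finset.mem_sigma.mpr ⟨Finset.mem_univ _, (G.mem_neighborFinset _ _).mpr d.adj⟩
  · intro a ha; rfl
  · intro d hd; rfl
  · intro a ha; rfl

open SimpleGraph in
/-- The sum over darts of a function of the underlying edge is twice the sum over edges. -/
lemma sum_dart_edge {V : Type*} [Fintype V] [DecidableEq V] (G : SimpleGraph V)
    [DecidableRel G.Adj] (F : Sym2 V → ℝ) :
    ∑ d : G.Dart, F d.edge = 2 * ∑ e ∈ G.edgeFinset, F e := by
  rw [Finset.sum_comp F Dart.edge]
  have himg : (Finset.univ : Finset G.Dart).image Dart.edge = G.edgeFinset := by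
    ext e
    simp only [Finset.mem_image, Finset.mem_univ, true_and, mem_edgeFinset]
    constructor
    · rintro ⟨d, rfl⟩; exact d.edge_mem
    · refine e.ind (fun i j h => ?_)
      exact ⟨⟨(i, j), h⟩, rfl⟩
  rw [himg, Finset.mul_sum]
  refine Finset.sum_congr rfl fun e he => ?_
  rw [G.dart_edge_fiber_card e (mem_edgeFinset.mp he)]
  simp [two_smul, two_mul]

lemma two_sub_div_le {a b : ℝ} (ha : 0 < a) (hb : 0 < b) : 2 - b / a ≤ a / b := by
  have h1 : (0:ℝ) ≤ (a - b)^2 / (a * b) := by positivity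
  have h2 : a / b + b / a - 2 = (a - b)^2 / (a * b) := by
    field_simp; ring
  linarith

/-- If `w ∈ Δ` is a non-unstable equilibrium and
`f(v) = -1 + (1/N) Σ_{{i,j} ∈ E} (w_i + w_j)/(v_i + v_j)`, then `f(w) = 0` and `f ≥ 0` on `Δ`:
`w` is a global minimum of `f` on `Δ` with minimum value `0`. -/
theorem nonUnstable_is_global_min
    {m : ℕ} (hm : 2 ≤ m) (G : SimpleGraph (Fin m)) [DecidableRel G.Adj]
    (hconn : G.Connected)
    (N : ℕ) (hN : N = G.edgeFinset.card)
    (c : ℝ) (hc0 : 0 < c) (hc1 : c < 1 / (N : ℝ))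
    (w : Fin m → ℝ) (hwΔ : w ∈ urnDomain G c)
    (hw1 : ∀ i, 0 < w i → dLyap G N i w = 0)
    (hw2 : ∀ i, w i = 0 → dLyap G N i w ≤ 0)
    (f : (Fin m → ℝ) → ℝ)
    (hf : ∀ v, f v = -1 + (1 / (N : ℝ)) * ∑ e ∈ G.edgeFinset, pairSum w e / pairSum v e) :
    f w = 0 ∧ ∀ v ∈ urnDomain G c, 0 ≤ f v := by
  classical
  obtain ⟨hw0, hwsum, hwc⟩ := hwΔ
  -- N is positive
  have hNpos : 0 < N := by
    rw [hN, Finset.card_pos]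
    have h01 : (⟨0, by omega⟩ : Fin m) ≠ ⟨1, by omega⟩ := by simp [Fin.ext_iff]
    obtain ⟨p⟩ := hconn.preconnected ⟨0, by omega⟩ ⟨1, by omega⟩
    cases p with
    | cons h _ =>
        exact ⟨_, SimpleGraph.mem_edgeFinset.mpr (G.mem_edgeSet.mpr h)⟩
  have hNR : (0:ℝ) < N := by exact_mod_cast hNpos
  -- positivity of pair sums on the domain
  have hpairpos : ∀ v : Fin m → ℝ, v ∈ urnDomain G c →
      ∀ e ∈ G.edgeFinset, 0 < pairSum v e := by
    rintro v ⟨hv0, hvsum, hvc⟩ e he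
    induction e using Sym2.ind with
    | _ i j =>
      have hadj : G.Adj i j := by simpa [SimpleGraph.mem_edgeFinset] using he
      have := hvc i j hadj
      have : c ≤ pairSum v s(i, j) := by simpa [pairSum] using this
      linarith
  have hwΔ' : w ∈ urnDomain G c := ⟨hw0, hwsum, hwc⟩
  constructor
  · -- f w = 0
    rw [hf w]
    have hsum : ∑ e ∈ G.edgeFinset, pairSum w e / pairSum w e = (N : ℝ) := by
      rw [Finset.sum_congr rfl (fun e he => div_self (hpairpos w hwΔ' e he).ne')]
      simp [hN]
    rw [hsum]
    field_simp
    norm_num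
  · -- f v ≥ 0 on Δ
    intro v hvΔ
    obtain ⟨hv0, hvsum, hvc⟩ := hvΔ
    have hvΔ' : v ∈ urnDomain G c := ⟨hv0, hvsum, hvc⟩
    set S : ℝ := ∑ e ∈ G.edgeFinset, pairSum v e / pairSum w e with hSdef
    -- rewrite S as a vertex sum
    have h2S : 2 * S = ∑ d : G.Dart, (v d.fst + v d.snd) / (w d.fst + w d.snd) := by
      rw [hSdef, ← sum_dart_edge G (fun e => pairSum v e / pairSum w e)]
      refine Fintype.sum_congr _ _ fun d => ?_
      rfl
    have hsplit : ∑ d : G.Dart, (v d.fst + v d.snd) / (w d.fst + w d.snd)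
        = (∑ d : G.Dart, v d.fst / (w d.fst + w d.snd))
          + ∑ d : G.Dart, v d.snd / (w d.fst + w d.snd) := by
      rw [← Finset.sum_add_distrib]
      exact Finset.sum_congr rfl fun d _ => add_div _ _ _
    have hsymm : ∑ d : G.Dart, v d.snd / (w d.fst + w d.snd)
        = ∑ d : G.Dart, v d.fst / (w d.fst + w d.snd) := by
      have hinv : Function.Involutive (SimpleGraph.Dart.symm : G.Dart → G.Dart) :=
        fun d => SimpleGraph.Dart.symm_symm d
      rw [← Equiv.sum_comp hinv.toPerm
        (fun d : G.Dart => v d.snd / (w d.fst + w d.snd))]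
      refine Fintype.sum_congr _ _ fun d => ?_
      simp [Function.Involutive.toPerm, SimpleGraph.Dart.symm, add_comm]
    have hSvert : S = ∑ i, v i * ∑ j ∈ G.neighborFinset i, 1 / (w i + w j) := by
      have h1 : S = ∑ d : G.Dart, v d.fst / (w d.fst + w d.snd) := by
        rw [hsplit, hsymm] at h2S; linarith
      rw [h1, sum_dart_eq G (fun i j => v i / (w i + w j))]
      refine Finset.sum_congr rfl fun i _ => ?_
      rw [Finset.mul_sum]
      exact Finset.sum_congr rfl fun j _ => by rw [mul_one_div]
    -- each vertex sum is at most N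
    have hT : ∀ i, (∑ j ∈ G.neighborFinset i, 1 / (w i + w j)) ≤ (N : ℝ) := by
      intro i
      rcases (hw0 i).lt_or_eq with h | h
      · have := hw1 i h
        simp only [dLyap] at this
        have h1 : (1 / (N : ℝ)) * ∑ j ∈ G.neighborFinset i, 1 / (w i + w j) = 1 := by
          linarith
        rw [div_mul_eq_mul_div, one_mul, div_eq_one_iff_eq hNR.ne'] at h1
        rw [h1]
      · have := hw2 i h.symm
        simp only [dLyap] at this
        have h1 : (1 / (N : ℝ)) * ∑ j ∈ G.neighborFinset i, 1 / (w i + w j) ≤ 1 := by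
          linarith
        rw [div_mul_eq_mul_div, one_mul, div_le_one hNR] at h1
        exact h1
    have hSle : S ≤ (N : ℝ) := by
      rw [hSvert]
      calc ∑ i, v i * ∑ j ∈ G.neighborFinset i, 1 / (w i + w j)
          ≤ ∑ i, v i * (N : ℝ) :=
            Finset.sum_le_sum fun i _ => mul_le_mul_of_nonneg_left (hT i) (hv0 i)
        _ = (N : ℝ) := by rw [← Finset.sum_mul, hvsum, one_mul]
    -- per-edge inequality
    have hedge : ∀ e ∈ G.edgeFinset,
        2 - pairSum v e / pairSum w e ≤ pairSum w e / pairSum v e := fun e he =>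
      two_sub_div_le (hpairpos w hwΔ' e he) (hpairpos v hvΔ' e he)
    have hmain : (N : ℝ) ≤ ∑ e ∈ G.edgeFinset, pairSum w e / pairSum v e := by
      have h1 : ∑ e ∈ G.edgeFinset, (2 - pairSum v e / pairSum w e)
          ≤ ∑ e ∈ G.edgeFinset, pairSum w e / pairSum v e :=
        Finset.sum_le_sum hedge
      have h2 : ∑ e ∈ G.edgeFinset, (2 - pairSum v e / pairSum w e)
          = 2 * (N : ℝ) - S := by
        rw [Finset.sum_sub_distrib, Finset.sum_const, hN]
        push_cast
        ring
      rw [h2] at h1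
      linarith
    rw [hf v]
    have h3 : (1 / (N : ℝ)) * (N : ℝ) ≤
        (1 / (N : ℝ)) * ∑ e ∈ G.edgeFinset, pairSum w e / pairSum v e :=
      mul_le_mul_of_nonneg_left hmain (by positivity)
    have h4 : (1 / (N : ℝ)) * (N : ℝ) = 1 := by field_simp
    linarith
end

section
/- If the finite connected graph G is not balanced bipartite (i.e. G is either not bipartite, or bipartite with parts of unequal sizes), then L is strictly concave on Δ: for all v, w ∈ Δ with v ≠ w and all t ∈ (0,1), L(tv + (1−t)w) > t L(v) + (1−t) L(w). -/
/-!
Each `v ↦ log (v_i + v_j)` is concave, and strictly so along every segment on which `v_i + v_j`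
changes, while `-∑ v_i = -1` is constant on `Δ`. So strict concavity can only fail between
`v ≠ w` for which `d = v - w` satisfies `d_i + d_j = 0` on every edge. Along a walk `d` then
alternates in sign, so by connectivity `d = ±a` with the sign of `d` a bipartition; and
`∑ d_i = 0` forces the two parts to have equal size, i.e. `G` is balanced bipartite.
-/

open Finset

namespace SimpleGraph

variable {V : Type*} {G : SimpleGraph V} {d : V → ℝ}

theorem Walk.apply_eq_neg_one_pow_mul (hd : ∀ i j, G.Adj i j → d j = -d i) {x y : V}
    (p : G.Walk x y) : d y = (-1) ^ p.length * d x := by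
  induction p with
  | nil => simp
  | cons hab _ ih => rw [ih, hd _ _ hab, Walk.length_cons, pow_succ]; ring

theorem Preconnected.eq_or_eq_neg_of_adj (hG : G.Preconnected)
    (hd : ∀ i j, G.Adj i j → d j = -d i) (x i : V) : d i = d x ∨ d i = -d x := by
  obtain ⟨p⟩ := hG x i
  rw [p.apply_eq_neg_one_pow_mul hd]
  rcases Nat.even_or_odd p.length with h | h
  · left; rw [h.neg_one_pow, one_mul]
  · right; rw [h.neg_one_pow, neg_one_mul]

end SimpleGraph

theorem two_mul_card_filter_eq_of_sum_eq_zero {V : Type*} [Fintype V] {d : V → ℝ} {a : ℝ}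
    (h : ∀ i, d i = a ∨ d i = -a) (ha : a ≠ 0) (hsum : ∑ i, d i = 0) :
    2 * #{i | d i = a} = Fintype.card V := by
  have hsplit : ∑ i, d i = (#{i | d i = a} - #{i | ¬ d i = a} : ℝ) * a := by
    rw [← sum_filter_add_sum_filter_not univ (fun i => d i = a)]
    rw [sum_congr rfl fun i hi => (mem_filter.mp hi).2,
      sum_congr rfl fun i hi => (h i).resolve_left (mem_filter.mp hi).2]
    simp only [sum_const, nsmul_eq_mul]
    ring
  have hcard := card_filter_add_card_filter_not (s := univ) (fun i => d i = a)
  rw [hsum, eq_comm, mul_eq_zero, sub_eq_zero] at hsplit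
  rw [← card_univ, ← hcard]
  exact_mod_cast (by linarith [hsplit.resolve_right ha] :
    (2 * #{i | d i = a} : ℝ) = #{i | d i = a} + #{i | ¬ d i = a})

theorem SimpleGraph.Connected.exists_balanced_bipartition {V : Type*} [Fintype V]
    {G : SimpleGraph V} (hG : G.Connected) {d : V → ℝ} (hd : ∀ i j, G.Adj i j → d j = -d i)
    (hsum : ∑ i, d i = 0) (hd0 : d ≠ 0) :
    ∃ A : Finset V, (∀ i j, G.Adj i j → (i ∈ A ↔ j ∉ A)) ∧ 2 * #A = Fintype.card V := by
  obtain ⟨x, hx⟩ : ∃ x, d x ≠ 0 := Function.ne_iff.mp hd0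
  have hsign := hG.preconnected.eq_or_eq_neg_of_adj hd x
  refine ⟨({i | d i = d x} : Finset V), fun i j hij => ?_,
    two_mul_card_filter_eq_of_sum_eq_zero hsign hx hsum⟩
  simp only [mem_filter, mem_univ, true_and, hd i j hij]
  rcases hsign i with h | h <;> simp [h, CharZero.neg_eq_self_iff, hx]

theorem Real.mul_sum_log_add_mul_sum_log_lt {ι : Type*} {s : Finset ι} {f g : ι → ℝ}
    (hf : ∀ i ∈ s, 0 < f i) (hg : ∀ i ∈ s, 0 < g i) (hne : ∃ i ∈ s, f i ≠ g i)
    {t : ℝ} (ht0 : 0 < t) (ht1 : t < 1) :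
    t * ∑ i ∈ s, Real.log (f i) + (1 - t) * ∑ i ∈ s, Real.log (g i)
      < ∑ i ∈ s, Real.log (t * f i + (1 - t) * g i) := by
  rw [mul_sum, mul_sum, ← sum_add_distrib]
  refine sum_lt_sum (fun i hi => ?_) ?_
  · simpa only [smul_eq_mul] using strictConcaveOn_log_Ioi.concaveOn.2 (hf i hi) (hg i hi)
      ht0.le (sub_nonneg.2 ht1.le) (add_sub_cancel t 1)
  · obtain ⟨i, hi, hfg⟩ := hne
    refine ⟨i, hi, ?_⟩
    simpa only [smul_eq_mul] using strictConcaveOn_log_Ioi.2 (hf i hi) (hg i hi) hfg ht0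
      (sub_pos.2 ht1) (add_sub_cancel t 1)

section pairSum

variable {m : ℕ}

@[simp]
theorem pairSum_mk (v : Fin m → ℝ) (i j : Fin m) : pairSum v s(i, j) = v i + v j := rfl

theorem pairSum_smul_add_smul (a b : ℝ) (v w : Fin m → ℝ) (e : Sym2 (Fin m)) :
    pairSum (a • v + b • w) e = a * pairSum v e + b * pairSum w e := by
  induction e using Sym2.ind with
  | _ i j => simp only [pairSum_mk, Pi.add_apply, Pi.smul_apply, smul_eq_mul]; ring

theorem pairSum_pos_of_mem_urnDomain {G : SimpleGraph (Fin m)} {c : ℝ} (hc : 0 < c)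
    {v : Fin m → ℝ} (hv : v ∈ urnDomain G c) {e : Sym2 (Fin m)} (he : e ∈ G.edgeSet) :
    0 < pairSum v e := by
  induction e using Sym2.ind with
  | _ i j => exact hc.trans_le (hv.2.2 i j he)

theorem exists_pairSum_ne_of_not_balanced_bipartite {G : SimpleGraph (Fin m)}
    [DecidableRel G.Adj] (hG : G.Connected)
    (hbb : ¬ ∃ A : Finset (Fin m), (∀ i j, G.Adj i j → (i ∈ A ↔ j ∉ A)) ∧ 2 * #A = m)
    {v w : Fin m → ℝ} (hsum : ∑ i, v i = ∑ i, w i) (hvw : v ≠ w) :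
    ∃ e ∈ G.edgeFinset, pairSum v e ≠ pairSum w e := by
  by_contra! h
  have hd : ∀ i j, G.Adj i j → (v - w) j = -(v - w) i := fun i j hij => by
    have := h s(i, j) (SimpleGraph.mem_edgeFinset.2 hij)
    simp only [pairSum_mk] at this
    simp only [Pi.sub_apply]
    linarith
  refine hbb ?_
  simpa only [Fintype.card_fin] using hG.exists_balanced_bipartition hd
    (by simp [sum_sub_distrib, hsum]) (sub_ne_zero.2 hvw)

end pairSum

theorem lyap_strictly_concave_of_not_balanced_bipartite_general
    {m : ℕ} (G : SimpleGraph (Fin m)) [DecidableRel G.Adj]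
    (hconn : G.Connected)
    (N : ℕ)
    (c : ℝ) (hc0 : 0 < c) (hc1 : c < 1 / (N : ℝ))
    (hnotbb : ¬ ∃ A : Finset (Fin m),
      (∀ i j, G.Adj i j → (i ∈ A ↔ j ∉ A)) ∧ 2 * A.card = m) :
    ∀ v ∈ urnDomain G c, ∀ w ∈ urnDomain G c, v ≠ w → ∀ t : ℝ, 0 < t → t < 1 →
      t * lyap G N v + (1 - t) * lyap G N w < lyap G N (t • v + (1 - t) • w) := by
  intro v hv w hw hvw t ht0 ht1
  obtain ⟨e, he, hne⟩ :=
    exists_pairSum_ne_of_not_balanced_bipartite hconn hnotbb (hv.2.1.trans hw.2.1.symm) hvw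
  have hlog := Real.mul_sum_log_add_mul_sum_log_lt
    (fun e he => pairSum_pos_of_mem_urnDomain hc0 hv (SimpleGraph.mem_edgeFinset.1 he))
    (fun e he => pairSum_pos_of_mem_urnDomain hc0 hw (SimpleGraph.mem_edgeFinset.1 he))
    ⟨e, he, hne⟩ ht0 ht1
  have hsum : ∑ i, (t • v + (1 - t) • w) i = 1 := by
    simp only [Pi.add_apply, Pi.smul_apply, smul_eq_mul, sum_add_distrib, ← mul_sum, hv.2.1,
      hw.2.1]
    ring
  simp only [lyap, pairSum_smul_add_smul, hv.2.1, hw.2.1, hsum]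
  linarith [mul_lt_mul_of_pos_left hlog (hc0.trans hc1)]

/-- If the finite connected graph `G` is not balanced bipartite, then `L` is
strictly concave on `Δ`. -/
theorem lyap_strictly_concave_of_not_balanced_bipartite
    {m : ℕ} (hm : 2 ≤ m) (G : SimpleGraph (Fin m)) [DecidableRel G.Adj]
    (hconn : G.Connected)
    (N : ℕ) (hN : N = G.edgeFinset.card)
    (c : ℝ) (hc0 : 0 < c) (hc1 : c < 1 / (N : ℝ))
    (hnotbb : ¬ ∃ A : Finset (Fin m),
      (∀ i j, G.Adj i j → (i ∈ A ↔ j ∉ A)) ∧ 2 * A.card = m) :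
    ∀ v ∈ urnDomain G c, ∀ w ∈ urnDomain G c, v ≠ w → ∀ t : ℝ, 0 < t → t < 1 →
      t * lyap G N v + (1 - t) * lyap G N w < lyap G N (t • v + (1 - t) • w) :=
  lyap_strictly_concave_of_not_balanced_bipartite_general G hconn N c hc0 hc1 hnotbb
end

section
/- Let G be a finite connected balanced bipartite graph with bipartition V = A ∪ B, |A| = |B|, and let w ∈ Δ satisfy w_i > 0 for all i and ∂L/∂v_i(w) = 0 for all i (i.e. w is an interior equilibrium). For η ∈ ℝ define v ∈ ℝ^m by v_i = w_i + η for i ∈ A and v_i = w_i − η for i ∈ B. If v_i ≥ 0 for all i, then v ∈ Δ, and ∂L/∂v_i(v) = 0 for all i; in particular v is a non-unstable equilibrium of F. Hence the set of such points forms a closed line segment of non-unstable equilibria through w. -/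
/-!
Moving mass `η` onto every vertex of `A` and off every vertex of `B` leaves each edge sum
`v_i + v_j` unchanged, because every edge joins `A` to `B`, and leaves the total mass unchanged,
because `|A| = |B|`. Both the edge constraints of `Δ` and the gradient of `L` see `v` only through
its edge sums, so the whole line through `w` in this direction consists of zeros of the gradient;
the constraints `v ≥ 0` cut it down to the segment `-min_A w ≤ η ≤ min_B w`.
-/

open Finset

section BipartiteShift

variable {ι : Type*} [DecidableEq ι] (A : Finset ι) (w : ι → ℝ)

def bipartiteShift (η : ℝ) : ι → ℝ := fun i => if i ∈ A then w i + η else w i - η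

@[simp]
theorem bipartiteShift_zero : bipartiteShift A w 0 = w := by
  ext i; simp [bipartiteShift]

theorem bipartiteShift_add_bipartiteShift_of_adj {G : SimpleGraph ι}
    (hbip : ∀ i j, G.Adj i j → (i ∈ A ↔ j ∉ A)) (η : ℝ) {i j : ι} (hij : G.Adj i j) :
    bipartiteShift A w η i + bipartiteShift A w η j = w i + w j := by
  have hA := hbip i j hij
  by_cases hi : i ∈ A
  · simp [bipartiteShift, hi, hA.mp hi]
  · simp [bipartiteShift, hi, not_not.mp (mt hA.mpr hi)]

theorem card_compl_eq_card_of_two_mul_card_eq [Fintype ι] (hbal : 2 * #A = Fintype.card ι) :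
    #Aᶜ = #A := by
  rw [card_compl]; omega

theorem sum_bipartiteShift [Fintype ι] (hbal : 2 * #A = Fintype.card ι) (η : ℝ) :
    ∑ i, bipartiteShift A w η i = ∑ i, w i := by
  simp only [bipartiteShift]
  rw [← sum_add_sum_compl A, ← sum_add_sum_compl A w,
    sum_congr rfl fun i hi => if_pos hi,
    sum_congr rfl fun i hi => if_neg (mem_compl.mp hi),
    sum_add_distrib, sum_sub_distrib, sum_const, sum_const,
    card_compl_eq_card_of_two_mul_card_eq A hbal]
  ring

theorem bipartiteShift_eq_lineMap (η : ℝ) :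
    bipartiteShift A w η = AffineMap.lineMap w (bipartiteShift A w 1) η := by
  ext i
  by_cases hi : i ∈ A <;> simp [bipartiteShift, AffineMap.lineMap_apply, hi] <;> ring

theorem bipartiteShift_nonneg_iff [Fintype ι] (hA : A.Nonempty) (hAc : Aᶜ.Nonempty) (η : ℝ) :
    (∀ i, 0 ≤ bipartiteShift A w η i) ↔ η ∈ Set.Icc (-A.inf' hA w) (Aᶜ.inf' hAc w) := by
  rw [Set.mem_Icc, neg_le, le_inf'_iff, le_inf'_iff]
  constructor
  · intro h
    refine ⟨fun i hi => ?_, fun i hi => ?_⟩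
    · have := h i; simp only [bipartiteShift, hi, if_true] at this; linarith
    · have := h i; simp only [bipartiteShift, mem_compl.mp hi, if_false] at this; linarith
  · rintro ⟨hlo, hhi⟩ i
    by_cases hi : i ∈ A
    · simp only [bipartiteShift, hi, if_true]; linarith [hlo i hi]
    · simp only [bipartiteShift, hi, if_false]; linarith [hhi i (mem_compl.mpr hi)]

theorem setOf_bipartiteShift_nonneg_eq_segment [Fintype ι] (hA : A.Nonempty) (hAc : Aᶜ.Nonempty)
    (hw : ∀ i, 0 ≤ w i) :
    {v : ι → ℝ | ∃ η : ℝ, (∀ i, v i = bipartiteShift A w η i) ∧ ∀ i, 0 ≤ v i} =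
      segment ℝ (bipartiteShift A w (-A.inf' hA w)) (bipartiteShift A w (Aᶜ.inf' hAc w)) := by
  have h0 := (bipartiteShift_nonneg_iff A w hA hAc 0).mp (by simpa using hw)
  rw [bipartiteShift_eq_lineMap A w (-A.inf' hA w), bipartiteShift_eq_lineMap A w (Aᶜ.inf' hAc w),
    ← image_segment, segment_eq_Icc (h0.1.trans h0.2)]
  ext v
  constructor
  · rintro ⟨η, hv, hnn⟩
    obtain rfl : v = bipartiteShift A w η := funext hv
    exact ⟨η, (bipartiteShift_nonneg_iff A w hA hAc η).mp hnn,
      (bipartiteShift_eq_lineMap A w η).symm⟩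
  · rintro ⟨η, hη, rfl⟩
    rw [← bipartiteShift_eq_lineMap]
    exact ⟨η, fun _ => rfl, (bipartiteShift_nonneg_iff A w hA hAc η).mpr hη⟩

end BipartiteShift

theorem dLyap_bipartiteShift {m : ℕ} {G : SimpleGraph (Fin m)} [DecidableRel G.Adj]
    {A : Finset (Fin m)} (hbip : ∀ i j, G.Adj i j → (i ∈ A ↔ j ∉ A))
    (N : ℕ) (w : Fin m → ℝ) (η : ℝ) (i : Fin m) :
    dLyap G N i (bipartiteShift A w η) = dLyap G N i w := by
  unfold dLyap
  congr 2
  refine sum_congr rfl fun j hj => ?_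
  rw [bipartiteShift_add_bipartiteShift_of_adj A w hbip η ((G.mem_neighborFinset i j).mp hj)]

theorem bipartiteShift_mem_urnDomain {m : ℕ} {G : SimpleGraph (Fin m)} {c : ℝ}
    {A : Finset (Fin m)} (hbip : ∀ i j, G.Adj i j → (i ∈ A ↔ j ∉ A))
    (hbal : 2 * #A = m) {w : Fin m → ℝ} (hw : w ∈ urnDomain G c) {η : ℝ}
    (hnn : ∀ i, 0 ≤ bipartiteShift A w η i) :
    bipartiteShift A w η ∈ urnDomain G c := by
  refine ⟨hnn, ?_, fun i j hij => ?_⟩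
  · rw [sum_bipartiteShift A w (by simpa using hbal)]; exact hw.2.1
  · rw [bipartiteShift_add_bipartiteShift_of_adj A w hbip η hij]; exact hw.2.2 i j hij

theorem interior_equilibrium_segment_general
    {m : ℕ} (hm : 2 ≤ m) (G : SimpleGraph (Fin m)) [DecidableRel G.Adj]
    (A : Finset (Fin m)) (hbip : ∀ i j, G.Adj i j → (i ∈ A ↔ j ∉ A)) (hbal : 2 * A.card = m)
    (N : ℕ)
    (c : ℝ)
    (w : Fin m → ℝ) (hwΔ : w ∈ urnDomain G c)
    (hweq : ∀ i, dLyap G N i w = 0) :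
    (∀ η : ℝ, (∀ i, 0 ≤ (if i ∈ A then w i + η else w i - η)) →
      ((fun i => if i ∈ A then w i + η else w i - η) ∈ urnDomain G c ∧
        (∀ i, dLyap G N i (fun i => if i ∈ A then w i + η else w i - η) = 0) ∧
        (∀ i, 0 < (if i ∈ A then w i + η else w i - η) →
          dLyap G N i (fun i => if i ∈ A then w i + η else w i - η) = 0) ∧
        (∀ i, (if i ∈ A then w i + η else w i - η) = 0 →
          dLyap G N i (fun i => if i ∈ A then w i + η else w i - η) ≤ 0))) ∧
    (∃ a b : Fin m → ℝ, w ∈ segment ℝ a b ∧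
      segment ℝ a b = {v : Fin m → ℝ | ∃ η : ℝ,
        (∀ i, v i = if i ∈ A then w i + η else w i - η) ∧ ∀ i, 0 ≤ v i}) := by
  have hcrit (η : ℝ) (i : Fin m) : dLyap G N i (bipartiteShift A w η) = 0 :=
    (dLyap_bipartiteShift hbip N w η i).trans (hweq i)
  refine ⟨fun η hnn => ⟨bipartiteShift_mem_urnDomain hbip hbal hwΔ hnn, hcrit η,
    fun i _ => hcrit η i, fun i _ => (hcrit η i).le⟩, ?_⟩
  have hA : A.Nonempty := card_pos.mp (by omega)
  have hAc : Aᶜ.Nonempty := card_pos.mp <| by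
    rw [card_compl_eq_card_of_two_mul_card_eq A (by simpa using hbal)]; omega
  have hset := setOf_bipartiteShift_nonneg_eq_segment A w hA hAc hwΔ.1
  refine ⟨_, _, ?_, hset.symm⟩
  rw [← hset]
  exact ⟨0, fun i => by simp, hwΔ.1⟩

/-- Let `G` be a finite connected balanced bipartite graph with bipartition
`A ∪ Aᶜ` and `w ∈ Δ` an interior equilibrium (`w_i > 0` and `∂L/∂v_i(w) = 0` for all `i`).
For `η ∈ ℝ` let `v_i = w_i + η` for `i ∈ A` and `v_i = w_i - η` for `i ∉ A`. If `v_i ≥ 0` for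
all `i`, then `v ∈ Δ` and `∂L/∂v_i(v) = 0` for all `i` — in particular `v` is a non-unstable
equilibrium of `F` — and the set of all such points is a closed segment through `w`. -/
theorem interior_equilibrium_segment
    {m : ℕ} (hm : 2 ≤ m) (G : SimpleGraph (Fin m)) [DecidableRel G.Adj]
    (hconn : G.Connected)
    (A : Finset (Fin m)) (hbip : ∀ i j, G.Adj i j → (i ∈ A ↔ j ∉ A)) (hbal : 2 * A.card = m)
    (N : ℕ) (hN : N = G.edgeFinset.card)
    (c : ℝ) (hc0 : 0 < c) (hc1 : c < 1 / (N : ℝ))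
    (w : Fin m → ℝ) (hwΔ : w ∈ urnDomain G c)
    (hwpos : ∀ i, 0 < w i) (hweq : ∀ i, dLyap G N i w = 0) :
    (∀ η : ℝ, (∀ i, 0 ≤ (if i ∈ A then w i + η else w i - η)) →
      ((fun i => if i ∈ A then w i + η else w i - η) ∈ urnDomain G c ∧
        (∀ i, dLyap G N i (fun i => if i ∈ A then w i + η else w i - η) = 0) ∧
        (∀ i, 0 < (if i ∈ A then w i + η else w i - η) →
          dLyap G N i (fun i => if i ∈ A then w i + η else w i - η) = 0) ∧
        (∀ i, (if i ∈ A then w i + η else w i - η) = 0 →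
          dLyap G N i (fun i => if i ∈ A then w i + η else w i - η) ≤ 0))) ∧
    (∃ a b : Fin m → ℝ, w ∈ segment ℝ a b ∧
      segment ℝ a b = {v : Fin m → ℝ | ∃ η : ℝ,
        (∀ i, v i = if i ∈ A then w i + η else w i - η) ∧ ∀ i, 0 ≤ v i}) :=
  interior_equilibrium_segment_general hm G A hbip hbal N c w hwΔ hweq
end

section
/- Let D be a real n × n diagonal matrix with strictly positive diagonal entries, and let A be a real symmetric negative semidefinite n × n matrix (i.e. ⟨Ax, x⟩ ≤ 0 for all x ∈ ℝ^n, where ⟨·,·⟩ is the standard inner product). Then every eigenvalue of B = D·A is a nonpositive real number, and the kernel of B equals the kernel of A; in particular, the geometric multiplicity of the eigenvalue 0 of B equals the dimension of the kernel of A. -/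
/-!
Over `ℂ`, `A` stays negative semidefinite and `D` positive definite. If `D A v = μ v` with
`v ≠ 0`, then `A v = μ D⁻¹ v`, so `v* A v = μ (v* D⁻¹ v)` with `v* A v ≤ 0 < v* D⁻¹ v`, which
forces `μ` to be a nonpositive real. Since `D` is invertible, `D A` and `A` have the same kernel.
-/

open Matrix
open scoped ComplexOrder

namespace Matrix

variable {n : Type*} [Fintype n]

lemma posSemidef_neg_of_isSymm_of_mulVec_dotProduct_nonpos {A : Matrix n n ℝ} (hA : A.IsSymm)
    (h : ∀ x, A *ᵥ x ⬝ᵥ x ≤ 0) : (-A).PosSemidef :=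
  .of_dotProduct_mulVec_nonneg (isHermitian_iff_isSymm.mpr hA).neg fun x => by
    simpa [neg_mulVec, dotProduct_comm x] using h x

variable [DecidableEq n]

lemma PosSemidef.map_ofReal {N : Matrix n n ℝ} (hN : N.PosSemidef) :
    (N.map ((↑) : ℝ → ℂ)).PosSemidef := by
  open scoped MatrixOrder in
  obtain ⟨B, rfl⟩ := CStarAlgebra.nonneg_iff_eq_star_mul_self.mp hN.nonneg
  change ((star B * B).map Complex.ofRealHom).PosSemidef
  rw [Matrix.map_mul, star_eq_conjTranspose,
    conjTranspose_map Complex.ofRealHom fun r => (Complex.conj_ofReal r).symm]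
  exact posSemidef_conjTranspose_mul_self _

lemma PosDef.nonneg_of_mul_mulVec_eq_smul {𝕜 : Type*} [RCLike 𝕜] {M N : Matrix n n 𝕜}
    (hM : M.PosDef) (hN : N.PosSemidef) {μ : 𝕜} {v : n → 𝕜} (hv : v ≠ 0)
    (h : (M * N) *ᵥ v = μ • v) : 0 ≤ μ := by
  have hNv : N *ᵥ v = μ • M⁻¹ *ᵥ v := by
    rw [← mulVec_smul, ← h, mulVec_mulVec,
      nonsing_inv_mul_cancel_left _ _ ((isUnit_iff_isUnit_det M).mp hM.isUnit)]
  have hpos : 0 < star v ⬝ᵥ M⁻¹ *ᵥ v := hM.inv.dotProduct_mulVec_pos hv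
  have hquad : star v ⬝ᵥ N *ᵥ v = μ * (star v ⬝ᵥ M⁻¹ *ᵥ v) := by
    rw [hNv, dotProduct_smul, smul_eq_mul]
  calc 0 ≤ star v ⬝ᵥ N *ᵥ v * (star v ⬝ᵥ M⁻¹ *ᵥ v)⁻¹ :=
        mul_nonneg (hN.dotProduct_mulVec_nonneg v) (RCLike.inv_pos_of_pos hpos).le
    _ = μ := by rw [hquad, mul_inv_cancel_right₀ hpos.ne']

lemma exists_mulVec_eq_smul_of_isRoot_charpoly {K : Type*} [Field K] {A : Matrix n n K} {μ : K}
    (h : A.charpoly.IsRoot μ) : ∃ v ≠ 0, A *ᵥ v = μ • v := by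
  rw [← charpoly_toLin', ← Module.End.hasEigenvalue_iff_isRoot_charpoly] at h
  obtain ⟨v, hv⟩ := h.exists_hasEigenvector
  exact ⟨v, hv.2, hv.apply_eq_smul⟩

lemma diagonal_mulVec_eq_zero_iff {K : Type*} [Field K] {d : n → K} (hd : ∀ i, d i ≠ 0)
    {x : n → K} : diagonal d *ᵥ x = 0 ↔ x = 0 :=
  (mulVec_injective_of_isUnit <| isUnit_diagonal.mpr <| Pi.isUnit_iff.mpr fun i =>
    (hd i).isUnit).eq_iff' (mulVec_zero _)

end Matrix

theorem diagonal_mul_negSemidef_spectrum_and_kernel_general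
    {n : ℕ}
    (d : Fin n → ℝ) (hd : ∀ i, 0 < d i)
    (A : Matrix (Fin n) (Fin n) ℝ) (hA : A.IsSymm)
    (hnsd : ∀ x : Fin n → ℝ, A.mulVec x ⬝ᵥ x ≤ 0)
    (B : Matrix (Fin n) (Fin n) ℝ) (hB : B = Matrix.diagonal d * A) :
    (∀ μ : ℂ, ((B.map (fun r : ℝ => (r : ℂ))).charpoly.IsRoot μ) → μ.im = 0 ∧ μ.re ≤ 0) ∧
    (∀ x : Fin n → ℝ, B.mulVec x = 0 ↔ A.mulVec x = 0) ∧
    Module.finrank ℝ (LinearMap.ker B.mulVecLin) =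
      Module.finrank ℝ (LinearMap.ker A.mulVecLin) := by
  have hker (x : Fin n → ℝ) : B *ᵥ x = 0 ↔ A *ᵥ x = 0 := by
    rw [hB, ← mulVec_mulVec, diagonal_mulVec_eq_zero_iff fun i => (hd i).ne']
  have hker_eq : LinearMap.ker B.mulVecLin = LinearMap.ker A.mulVecLin := by
    ext x
    exact hker x
  refine ⟨fun μ hμ => ?_, hker, by rw [hker_eq]⟩
  obtain ⟨v, hv, hBv⟩ := exists_mulVec_eq_smul_of_isRoot_charpoly hμ
  have hBc : B.map ((↑) : ℝ → ℂ) = (diagonal d).map (↑) * A.map (↑) :=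
    hB ▸ Matrix.map_mul (f := Complex.ofRealHom)
  have hD : ((diagonal d).map ((↑) : ℝ → ℂ)).PosDef := by
    simpa [posDef_diagonal_iff] using hd
  have hnegA := (posSemidef_neg_of_isSymm_of_mulVec_dotProduct_nonpos hA hnsd).map_ofReal
  have hμ_nonpos : μ ≤ 0 := neg_nonneg.mp <| hD.nonneg_of_mul_mulVec_eq_smul hnegA hv <| by
    rw [Matrix.map_neg _ Complex.ofReal_neg, mul_neg, neg_mulVec, neg_smul, ← hBv, hBc]
  exact (Complex.le_def.mp hμ_nonpos).symm

/-- If `D = diagonal d` with `d_i > 0` and `A` is real symmetric negative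
semidefinite, then every complex eigenvalue of `B = D * A` is a nonpositive real number, and
`ker B = ker A`; in particular the geometric multiplicity of the eigenvalue `0` of `B` equals
`dim ker A`. -/
theorem diagonal_mul_negSemidef_spectrum_and_kernel
    {n : ℕ} (hn : 1 ≤ n)
    (d : Fin n → ℝ) (hd : ∀ i, 0 < d i)
    (A : Matrix (Fin n) (Fin n) ℝ) (hA : A.IsSymm)
    (hnsd : ∀ x : Fin n → ℝ, A.mulVec x ⬝ᵥ x ≤ 0)
    (B : Matrix (Fin n) (Fin n) ℝ) (hB : B = Matrix.diagonal d * A) :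
    (∀ μ : ℂ, ((B.map (fun r : ℝ => (r : ℂ))).charpoly.IsRoot μ) → μ.im = 0 ∧ μ.re ≤ 0) ∧
    (∀ x : Fin n → ℝ, B.mulVec x = 0 ↔ A.mulVec x = 0) ∧
    Module.finrank ℝ (LinearMap.ker B.mulVecLin) =
      Module.finrank ℝ (LinearMap.ker A.mulVecLin) :=
  diagonal_mul_negSemidef_spectrum_and_kernel_general d hd A hA hnsd B hB
end

section
/- Let M be a real m × m block lower-triangular matrix M = [[A, 0], [C, B]], where A is a k × k diagonal matrix with diagonal entries a_1, …, a_k, C is an arbitrary (m−k) × k real matrix, and B = D·S, where D is an (m−k) × (m−k) diagonal matrix with strictly positive diagonal entries and S is a real symmetric negative semidefinite (m−k) × (m−k) matrix. Then M has a complex eigenvalue with strictly positive real part if and only if a_i > 0 for some i ∈ {1, …, k}. -/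
/-!
Block triangularity splits the characteristic polynomial as `charpoly A * charpoly (D S)`, and the
roots of the first factor are the `a i`. For an eigenpair `D S v = μ v` of the second block,
`S v = μ D⁻¹ v`, so `v* S v = μ · ∑ |v i|² / d i`; the left side has real part
`x ⬝ S x + y ⬝ S y ≤ 0` for `v = x + i y`, which forces `Re μ ≤ 0`.
-/

open Matrix Polynomial

namespace Matrix

variable {n : Type*} [Fintype n]

theorem isRoot_charpoly_iff_exists_mulVec_eq_smul [DecidableEq n] {R : Type*} [CommRing R]
    [IsDomain R] (A : Matrix n n R) (μ : R) :
    A.charpoly.IsRoot μ ↔ ∃ v ≠ 0, A *ᵥ v = μ • v := by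
  have scalar_mulVec (v : n → R) : scalar n μ *ᵥ v = μ • v := by
    ext i; simp [scalar_apply, mulVec_diagonal]
  simp only [IsRoot, eval_charpoly, ← exists_mulVec_eq_zero_iff, sub_mulVec, scalar_mulVec,
    sub_eq_zero, eq_comm (a := μ • _)]

theorem isRoot_charpoly_diagonal_iff [DecidableEq n] {R : Type*} [CommRing R] [IsDomain R]
    (a : n → R) (μ : R) :
    (diagonal a).charpoly.IsRoot μ ↔ ∃ i, μ = a i := by
  rw [charpoly_diagonal, isRoot_prod]
  simp [sub_eq_zero]

theorem re_star_dotProduct_map_ofReal_mulVec (S : Matrix n n ℝ) (v : n → ℂ) :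
    (star v ⬝ᵥ S.map (↑) *ᵥ v).re =
      S *ᵥ (fun i => (v i).re) ⬝ᵥ (fun i => (v i).re) +
        S *ᵥ (fun i => (v i).im) ⬝ᵥ (fun i => (v i).im) := by
  simp only [dotProduct, mulVec, map_apply, Complex.re_sum, ← Finset.sum_add_distrib]
  refine Finset.sum_congr rfl fun i _ => ?_
  rw [Finset.mul_sum, Complex.re_sum, Finset.sum_mul, Finset.sum_mul, ← Finset.sum_add_distrib]
  refine Finset.sum_congr rfl fun j _ => ?_
  simp only [Pi.star_apply, RCLike.star_def, Complex.mul_re, Complex.mul_im, Complex.conj_re,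
    Complex.conj_im, Complex.ofReal_re, Complex.ofReal_im]
  ring

theorem re_nonpos_of_diagonal_mul_mulVec_eq_smul [DecidableEq n] {d : n → ℝ} (hd : ∀ i, 0 < d i)
    {S : Matrix n n ℝ} (hS : ∀ x, S *ᵥ x ⬝ᵥ x ≤ 0) {μ : ℂ} {v : n → ℂ} (hv : v ≠ 0)
    (hμ : (diagonal d * S).map (↑) *ᵥ v = μ • v) : μ.re ≤ 0 := by
  set p : ℝ := ∑ i, Complex.normSq (v i) / d i
  have hp : 0 < p := by
    obtain ⟨i, hi⟩ := Function.ne_iff.mp hv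
    exact Finset.sum_pos' (fun j _ => div_nonneg (Complex.normSq_nonneg _) (hd j).le)
      ⟨i, Finset.mem_univ i, div_pos (Complex.normSq_pos.2 hi) (hd i)⟩
  have hSv (i : n) : (S.map (↑) *ᵥ v) i = μ * v i / d i := by
    have hi : (d i : ℂ) * (S.map (↑) *ᵥ v) i = μ * v i := by
      simpa only [mulVec, dotProduct, map_apply, diagonal_mul, Complex.ofReal_mul, mul_assoc,
        ← Finset.mul_sum, Pi.smul_apply, smul_eq_mul] using congrFun hμ i
    rw [← hi, mul_div_cancel_left₀ _ (Complex.ofReal_ne_zero.2 (hd i).ne')]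
  have hquad : star v ⬝ᵥ S.map (↑) *ᵥ v = μ * p := by
    simp only [dotProduct, hSv, p, Complex.ofReal_sum, Finset.mul_sum]
    refine Finset.sum_congr rfl fun i _ => ?_
    rw [Complex.ofReal_div, Complex.normSq_eq_conj_mul_self]
    simp only [Pi.star_apply, RCLike.star_def]
    ring
  have hre : μ.re * p ≤ 0 := by
    have hre_quad := congrArg Complex.re hquad
    rw [re_star_dotProduct_map_ofReal_mulVec, Complex.re_mul_ofReal] at hre_quad
    rw [← hre_quad]
    exact add_nonpos (hS _) (hS _)
  exact nonpos_of_mul_nonpos_left hre hp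

end Matrix

theorem block_triangular_positive_eigenvalue_iff_general
    {k l : ℕ}
    (a : Fin k → ℝ)
    (C : Matrix (Fin l) (Fin k) ℝ)
    (d : Fin l → ℝ) (hd : ∀ i, 0 < d i)
    (S : Matrix (Fin l) (Fin l) ℝ)
    (hnsd : ∀ x : Fin l → ℝ, S.mulVec x ⬝ᵥ x ≤ 0)
    (M : Matrix (Fin k ⊕ Fin l) (Fin k ⊕ Fin l) ℝ)
    (hM : M = Matrix.fromBlocks (Matrix.diagonal a) 0 C (Matrix.diagonal d * S)) :
    (∃ μ : ℂ, ((M.map (fun r : ℝ => (r : ℂ))).charpoly.IsRoot μ) ∧ 0 < μ.re) ↔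
      ∃ i, 0 < a i := by
  subst hM
  have hcharpoly : ((fromBlocks (diagonal a) 0 C (diagonal d * S)).map (↑)).charpoly =
      (diagonal fun i => (a i : ℂ)).charpoly * ((diagonal d * S).map (↑)).charpoly := by
    rw [fromBlocks_map, Matrix.map_zero _ Complex.ofReal_zero, diagonal_map Complex.ofReal_zero,
      charpoly_fromBlocks_zero₁₂]
  simp only [hcharpoly, root_mul, isRoot_charpoly_diagonal_iff]
  constructor
  · rintro ⟨μ, ⟨i, rfl⟩ | hroot, hpos⟩
    · exact ⟨i, by simpa using hpos⟩
    · obtain ⟨v, hv, hμ⟩ := (isRoot_charpoly_iff_exists_mulVec_eq_smul _ _).1 hroot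
      exact absurd (re_nonpos_of_diagonal_mul_mulVec_eq_smul hd hnsd hv hμ) hpos.not_ge
  · rintro ⟨i, hi⟩
    exact ⟨a i, Or.inl ⟨i, rfl⟩, by simpa using hi⟩

/-- Let `M = [[A, 0], [C, B]]` be block lower-triangular, where
`A = diagonal a` is `k × k` diagonal, `C` is arbitrary, and `B = D * S` with `D` diagonal with
strictly positive diagonal entries and `S` real symmetric negative semidefinite. Then `M` has a
complex eigenvalue with strictly positive real part iff `a_i > 0` for some `i`. -/
theorem block_triangular_positive_eigenvalue_iff
    {k l : ℕ}
    (a : Fin k → ℝ)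
    (C : Matrix (Fin l) (Fin k) ℝ)
    (d : Fin l → ℝ) (hd : ∀ i, 0 < d i)
    (S : Matrix (Fin l) (Fin l) ℝ) (hS : S.IsSymm)
    (hnsd : ∀ x : Fin l → ℝ, S.mulVec x ⬝ᵥ x ≤ 0)
    (M : Matrix (Fin k ⊕ Fin l) (Fin k ⊕ Fin l) ℝ)
    (hM : M = Matrix.fromBlocks (Matrix.diagonal a) 0 C (Matrix.diagonal d * S)) :
    (∃ μ : ℂ, ((M.map (fun r : ℝ => (r : ℂ))).charpoly.IsRoot μ) ∧ 0 < μ.re) ↔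
      ∃ i, 0 < a i :=
  block_triangular_positive_eigenvalue_iff_general a C d hd S hnsd M hM
end
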